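/- arXiv:1207.5035 — 6 statements merged into one kernel-verified Lean document; each statement's English description precedes it below -/
import Mathlib

section
/- Let τ ∈ (0,1), let x ∈ ℤ, and let η : ℤ → {0,1} be a left-finite occupation configuration (η_y = 0 for all sufficiently negative y). Define N_x(η) = ∑_{y ≤ x} η_y, Q_x(η) = τ^{N_x(η)}, and for each y, Q̃_y(η) = τ^{N_{y−1}(η)} η_y. Then for every n ≥ 0: (Q_x(η))^n = ∑_{k=0}^{n} (n choose k)_τ (τ;τ)_k (−1)^k ∑_{x_1 < x_2 < ⋯ < x_k ≤ x} Q̃_{x_1}(η) ⋯ Q̃_{x_k}(η), where the empty sum (k = 0) equals 1. -/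
/-!
Only occupied sites contribute to the inner sum, and the `i`-th occupied site (counted from `0`)
contributes `τ^i`; so the inner sum is the elementary symmetric function
`e_k(1, τ, …, τ^(N-1))` with `N = N_x(η)`. The identity
`∑_k (-1)^k (τ;τ)_n/(τ;τ)_(n-k) e_k(1, …, τ^(N-1)) = τ^(nN)` is then proved by induction on `N`,
from `e_(k+1)(1, …, τ^N) = e_(k+1)(1, …, τ^(N-1)) + τ^N e_k(1, …, τ^(N-1))` and the fact that the
coefficient of index `k + 1` for `n + 1` is `-(1 - τ^(n+1))` times that of index `k` for `n`.
-/

/-- N_y(η) = ∑_{z ≤ y} η_z, the number of particles at or to the left of y.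
Since η vanishes below M, this equals the count of occupied sites in [M, y]. -/
noncomputable def Nocc (η : ℤ → ℕ) (M y : ℤ) : ℕ :=
  ((Finset.Icc M y).filter fun z => η z = 1).card

/-- Q_y(η) = τ^{N_y(η)}. -/
noncomputable def Qocc (τ : ℝ) (η : ℤ → ℕ) (M y : ℤ) : ℝ := τ ^ Nocc η M y

/-- Q̃_y(η) = τ^{N_{y−1}(η)} η_y. -/
noncomputable def Qtil (τ : ℝ) (η : ℤ → ℕ) (M y : ℤ) : ℝ := τ ^ Nocc η M (y - 1) * (η y : ℝ)

/-- (τ;τ)_m = ∏_{j=1}^m (1 − τ^j). -/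
noncomputable def qPoch (τ : ℝ) (m : ℕ) : ℝ := ∏ j ∈ Finset.range m, (1 - τ ^ (j + 1))

/-- The τ-binomial coefficient (n choose k)_τ = (τ;τ)_n/((τ;τ)_k (τ;τ)_{n−k}). -/
noncomputable def qBinomR (τ : ℝ) (n k : ℕ) : ℝ := qPoch τ n / (qPoch τ k * qPoch τ (n - k))

namespace Multiset

variable {R : Type*} [CommSemiring R]

theorem esymm_zero_right (s : Multiset R) : s.esymm 0 = 1 := by
  simp [esymm]

theorem esymm_zero_succ (k : ℕ) : (0 : Multiset R).esymm (k + 1) = 0 := by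
  simp [esymm, powersetCard_zero_right]

theorem esymm_cons_succ (a : R) (s : Multiset R) (k : ℕ) :
    (a ::ₘ s).esymm (k + 1) = s.esymm (k + 1) + a * s.esymm k := by
  simp [esymm, map_map, sum_map_mul_left]

theorem esymm_cons_zero (s : Multiset R) : (0 ::ₘ s).esymm = s.esymm := by
  funext k
  cases k with
  | zero => simp only [esymm_zero_right]
  | succ k => simp [esymm_cons_succ]

theorem esymm_cons_congr {s t : Multiset R} (h : s.esymm = t.esymm) (a : R) :
    (a ::ₘ s).esymm = (a ::ₘ t).esymm := by
  funext k
  cases k with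
  | zero => simp only [esymm_zero_right]
  | succ k => simp only [esymm_cons_succ, h]

end Multiset

section GeometricEsymm

variable {R : Type*} [CommRing R] (τ : R)

theorem esymm_map_pow_range_succ_succ (m k : ℕ) :
    ((Multiset.range (m + 1)).map (τ ^ ·)).esymm (k + 1)
      = ((Multiset.range m).map (τ ^ ·)).esymm (k + 1)
        + τ ^ m * ((Multiset.range m).map (τ ^ ·)).esymm k := by
  rw [Multiset.range_succ, Multiset.map_cons, Multiset.esymm_cons_succ]

noncomputable def qDescFactorial (n k : ℕ) : R := ∏ j ∈ Finset.range k, (1 - τ ^ (n - j))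

theorem qDescFactorial_zero_right (n : ℕ) : qDescFactorial τ n 0 = 1 := Finset.prod_range_zero _

theorem qDescFactorial_succ_succ (n k : ℕ) :
    qDescFactorial τ (n + 1) (k + 1) = (1 - τ ^ (n + 1)) * qDescFactorial τ n k := by
  simp only [qDescFactorial, Finset.prod_range_succ', Nat.add_sub_add_right, Nat.sub_zero,
    mul_comm]

theorem sum_neg_one_pow_mul_qDescFactorial_mul_esymm (m n : ℕ) :
    ∑ k ∈ Finset.range (n + 1),
        (-1) ^ k * qDescFactorial τ n k * ((Multiset.range m).map (τ ^ ·)).esymm k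
      = τ ^ (n * m) := by
  induction m generalizing n with
  | zero =>
    rw [Finset.sum_range_succ']
    simp [Multiset.esymm_zero_succ, Multiset.esymm_zero_right, qDescFactorial_zero_right]
  | succ m ih =>
    cases n with
    | zero => simp [Multiset.esymm_zero_right, qDescFactorial_zero_right]
    | succ n =>
      have hstep : ∀ k, (-1) ^ (k + 1) * qDescFactorial τ (n + 1) (k + 1) *
            ((Multiset.range (m + 1)).map (τ ^ ·)).esymm (k + 1)
          = (-1) ^ (k + 1) * qDescFactorial τ (n + 1) (k + 1) *
              ((Multiset.range m).map (τ ^ ·)).esymm (k + 1)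
            + τ ^ m * (τ ^ (n + 1) - 1) *
              ((-1) ^ k * qDescFactorial τ n k * ((Multiset.range m).map (τ ^ ·)).esymm k) := by
        intro k
        rw [esymm_map_pow_range_succ_succ, qDescFactorial_succ_succ]
        ring
      have hsplit : ∑ k ∈ Finset.range (n + 2), (-1) ^ k * qDescFactorial τ (n + 1) k *
            ((Multiset.range (m + 1)).map (τ ^ ·)).esymm k
          = ∑ k ∈ Finset.range (n + 2), (-1) ^ k * qDescFactorial τ (n + 1) k *
              ((Multiset.range m).map (τ ^ ·)).esymm k
            + τ ^ m * (τ ^ (n + 1) - 1) * ∑ k ∈ Finset.range (n + 1), (-1) ^ k *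
              qDescFactorial τ n k * ((Multiset.range m).map (τ ^ ·)).esymm k := by
        rw [Finset.sum_range_succ', Finset.sum_range_succ' _ (n + 1),
          Finset.sum_congr rfl fun k _ => hstep k, Finset.sum_add_distrib, Finset.mul_sum]
        simp only [Multiset.esymm_zero_right, qDescFactorial_zero_right]
        ring
      rw [hsplit, ih, ih]
      ring

end GeometricEsymm

theorem qPoch_pos {τ : ℝ} (h0 : 0 ≤ τ) (h1 : τ < 1) (m : ℕ) : 0 < qPoch τ m :=
  Finset.prod_pos fun j _ => sub_pos.mpr (pow_lt_one₀ h0 h1 (Nat.succ_ne_zero j))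

theorem qPoch_eq_qPoch_sub_mul_qDescFactorial (τ : ℝ) {n k : ℕ} (hk : k ≤ n) :
    qPoch τ n = qPoch τ (n - k) * qDescFactorial τ n k := by
  induction n generalizing k with
  | zero => simp [Nat.le_zero.mp hk, qDescFactorial_zero_right]
  | succ n ih =>
    cases k with
    | zero => simp [qDescFactorial_zero_right]
    | succ k =>
      rw [qPoch, Finset.prod_range_succ, ← qPoch, ih (Nat.le_of_succ_le_succ hk),
        qDescFactorial_succ_succ, Nat.add_sub_add_right]
      ring

theorem qBinomR_mul_qPoch {τ : ℝ} (h0 : 0 ≤ τ) (h1 : τ < 1) {n k : ℕ} (hk : k ≤ n) :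
    qBinomR τ n k * qPoch τ k = qDescFactorial τ n k := by
  rw [qBinomR, qPoch_eq_qPoch_sub_mul_qDescFactorial τ hk]
  field_simp [(qPoch_pos h0 h1 k).ne', (qPoch_pos h0 h1 (n - k)).ne']

theorem Nocc_add_one (η : ℤ → ℕ) {M z : ℤ} (hz : M ≤ z + 1) :
    Nocc η M (z + 1) = Nocc η M z + if η (z + 1) = 1 then 1 else 0 := by
  unfold Nocc
  rw [← Finset.insert_Icc_right_eq_Icc_add_one hz, Finset.filter_insert]
  split_ifs
  · exact Finset.card_insert_of_notMem (by simp)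
  · rfl

theorem Qtil_add_one (τ : ℝ) (η : ℤ → ℕ) (M z : ℤ) :
    Qtil τ η M (z + 1) = τ ^ Nocc η M z * η (z + 1) := by
  rw [Qtil, add_sub_cancel_right]

theorem esymm_map_Qtil_Icc (τ : ℝ) (η : ℤ → ℕ) (hη : ∀ y, η y ≤ 1) (M x : ℤ) :
    ((Finset.Icc M x).val.map (Qtil τ η M)).esymm
      = ((Multiset.range (Nocc η M x)).map (τ ^ ·)).esymm := by
  have hempty : ∀ x < M, ((Finset.Icc M x).val.map (Qtil τ η M)).esymm
      = ((Multiset.range (Nocc η M x)).map (τ ^ ·)).esymm := fun x hx => by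
    simp [Nocc, Finset.Icc_eq_empty_of_lt hx]
  rcases lt_or_ge x M with hx | hx
  · exact hempty x hx
  replace hx : M - 1 ≤ x := by omega
  induction x, hx using Int.leInduction with
  | base => exact hempty _ (by omega)
  | succ z hz ih =>
    have hM : M ≤ z + 1 := by omega
    rw [← Finset.insert_Icc_right_eq_Icc_add_one hM, Finset.insert_val_of_notMem (by simp),
      Multiset.map_cons, Qtil_add_one, Nocc_add_one η hM]
    rcases Nat.le_one_iff_eq_zero_or_eq_one.mp (hη (z + 1)) with h | h
    · simp only [h, Nat.cast_zero, mul_zero, Multiset.esymm_cons_zero, ih, zero_ne_one, if_false,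
        add_zero]
    · simp only [h, Nat.cast_one, mul_one, Multiset.esymm_cons_congr ih, if_true,
        Multiset.range_succ, Multiset.map_cons]

theorem Qx_pow_eq_sum_Qtil_general (τ : ℝ) (h0 : 0 < τ) (h1 : τ < 1) (x M : ℤ)
    (η : ℤ → ℕ) (hη : ∀ y, η y ≤ 1) (n : ℕ) :
    (Qocc τ η M x) ^ n
      = ∑ k ∈ Finset.range (n + 1),
          qBinomR τ n k * qPoch τ k * (-1 : ℝ) ^ k *
            ∑ S ∈ Finset.powersetCard k (Finset.Icc M x), ∏ y ∈ S, Qtil τ η M y := by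
  rw [Qocc, ← pow_mul, mul_comm, ← sum_neg_one_pow_mul_qDescFactorial_mul_esymm]
  refine Finset.sum_congr rfl fun k hk => ?_
  rw [← qBinomR_mul_qPoch h0.le h1 (Finset.mem_range_succ_iff.mp hk), ← Finset.esymm_map_val,
    esymm_map_Qtil_Icc τ η hη]
  ring

/-- For τ ∈ (0,1), x ∈ ℤ, and a left-finite occupation configuration η
(η_y = 0 for y < M), for every n ≥ 0:
(Q_x(η))^n = ∑_{k=0}^{n} (n choose k)_τ (τ;τ)_k (−1)^k ∑_{x_1<⋯<x_k ≤ x} Q̃_{x_1}⋯Q̃_{x_k}.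
The sum over increasing tuples x_1 < ⋯ < x_k ≤ x is realized as the sum over k-element
subsets of [M, x] (all terms containing a site below M vanish since Q̃_y = 0 there). -/
theorem Qx_pow_eq_sum_Qtil (τ : ℝ) (h0 : 0 < τ) (h1 : τ < 1) (x M : ℤ)
    (η : ℤ → ℕ) (hη : ∀ y, η y ≤ 1) (hM : ∀ y, y < M → η y = 0) (n : ℕ) :
    (Qocc τ η M x) ^ n
      = ∑ k ∈ Finset.range (n + 1),
          qBinomR τ n k * qPoch τ k * (-1 : ℝ) ^ k *
            ∑ S ∈ Finset.powersetCard k (Finset.Icc M x), ∏ y ∈ S, Qtil τ η M y :=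
  Qx_pow_eq_sum_Qtil_general τ h0 h1 x M η hη n
end

section
/- For 0 < τ < 1 and any k ≥ 1 and distinct complex numbers z_1, …, z_k that avoid the poles: ∑_{σ ∈ S_k} ∏_{1 ≤ A < B ≤ k} (z_{σ(A)} − z_{σ(B)})/(z_{σ(A)} − τ z_{σ(B)}) = (τ;τ)_k · τ^{−k(k−1)/2} · z_1 ⋯ z_k · det[1/(z_i − τ z_j)]_{i,j=1}^{k}. -/
/-!
With `r a b = (z a - z b) / (z a - τ * z b)`, the summand of `σ` times `∏_{A<B} r (σ B) (σ A)` is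
the `σ`-invariant product `c = ∏_{a ≠ b} r a b`, so the left side is `c` times
`∑_σ ∏_{A<B} (z (σ B) - τ * z (σ A)) / (z (σ B) - z (σ A))`. That sum is the Poincaré polynomial
`∏_{m=1}^{k} (1 + τ + ⋯ + τ^(m-1))`: fixing `σ 0 = p` and recursing leaves
`∑_p ∏_{l ≠ p} (z l - τ * z p) / (z l - z p)`, and reading off the coefficient of `X^k` in
`∏_l (τ X - z l)` by Lagrange interpolation at the nodes `0, z 1, …, z k` shows that this is
`(τ^k - 1) / (τ - 1)`. On the right, Cauchy's determinant with `y j = τ * z j` equals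
`τ^(k(k-1)/2) * c / ((1 - τ)^k * ∏ z)`, and `(τ;τ)_k` is `(1 - τ)^k` times the Poincaré polynomial.
-/

open Finset

section Pairs

variable {ι M : Type*} [Fintype ι] [CommMonoid M]

theorem prod_filter_fst_lt_snd [LinearOrder ι] [LocallyFiniteOrderTop ι] (f : ι × ι → M) :
    ∏ p ∈ univ.filter (fun p : ι × ι => p.1 < p.2), f p = ∏ i, ∏ j ∈ Ioi i, f (i, j) :=
  prod_finset_product _ _ _ (by simp)

theorem prod_prod_Ioi_const [LinearOrder ι] [LocallyFiniteOrderTop ι] (c : M) :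
    ∏ i : ι, ∏ _j ∈ Ioi i, c = c ^ (Fintype.card ι).choose 2 := by
  rw [← prod_filter_fst_lt_snd (fun _ => c), prod_const, ← univ_product_univ,
    card_product_filter_lt, card_univ]

theorem prod_prod_erase_eq_prod_prod_Ioi_mul [LinearOrder ι] [LocallyFiniteOrderTop ι]
    [LocallyFiniteOrderBot ι] (f : ι → ι → M) :
    ∏ i, ∏ j ∈ univ.erase i, f i j = ∏ i, ∏ j ∈ Ioi i, f i j * f j i := by
  simp_rw [← compl_singleton, ← Ioi_disjUnion_Iio, prod_disjUnion, prod_mul_distrib]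
  exact congrArg _ (prod_comm' (by simp))

theorem prod_prod_erase_comp_perm [DecidableEq ι] (σ : Equiv.Perm ι) (f : ι → ι → M) :
    ∏ i, ∏ j ∈ univ.erase i, f (σ i) (σ j) = ∏ i, ∏ j ∈ univ.erase i, f i j := by
  rw [← Equiv.prod_comp σ (fun i => ∏ j ∈ univ.erase i, f i j)]
  exact prod_congr rfl fun i _ => prod_equiv σ (by simp) (by simp)

theorem prod_swap_zero_succ_eq_prod_erase {n : ℕ} (p : Fin (n + 1)) (f : Fin (n + 1) → M) :
    ∏ j : Fin n, f (Equiv.swap 0 p j.succ) = ∏ l ∈ univ.erase p, f l := by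
  rw [← compl_singleton, ← prod_equiv (Equiv.swap 0 p) (s := {0}ᶜ)
    (f := fun i => f (Equiv.swap 0 p i)) (by simp [Equiv.swap_apply_eq_iff]) (by simp),
    ← Fin.image_succ_univ, prod_image (Fin.succ_injective _).injOn]

open Equiv in
theorem prod_prod_Ioi_decomposeFin_symm {n : ℕ} (f : Fin (n + 1) → Fin (n + 1) → M)
    (p : Fin (n + 1)) (e : Perm (Fin n)) :
    ∏ i, ∏ j ∈ Ioi i, f (Perm.decomposeFin.symm (p, e) i) (Perm.decomposeFin.symm (p, e) j)
      = (∏ l ∈ univ.erase p, f p l)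
        * ∏ i, ∏ j ∈ Ioi i, f (swap 0 p (e i).succ) (swap 0 p (e j).succ) := by
  simp only [Fin.prod_univ_succ, Fin.prod_Ioi_zero, Fin.prod_Ioi_succ,
    Perm.decomposeFin_symm_apply_zero, Perm.decomposeFin_symm_apply_succ]
  exact congrArg (· * _) ((Equiv.prod_comp e (fun j => f p (swap 0 p j.succ))).trans
    (prod_swap_zero_succ_eq_prod_erase p (f p)))

end Pairs

variable {K : Type*} [Field K]

open Polynomial in
theorem sum_prod_erase_sub_mul_div_sub [DecidableEq K] {s : Finset K} (hs : 0 ∉ s) {τ : K}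
    (hτ : τ ≠ 1) :
    ∑ x ∈ s, ∏ y ∈ s.erase x, (y - τ * x) / (y - x) = ∑ m ∈ range #s, τ ^ m := by
  set P : K[X] := ∏ y ∈ s, (C τ * X - C y)
  have hlin : ∀ y ∈ s, (C τ * X - C y).natDegree ≤ 1 := fun y _ => by compute_degree
  have hnat : P.natDegree ≤ #s :=
    (natDegree_prod_le _ _).trans (by simpa using sum_le_card_nsmul s _ 1 hlin)
  have hdeg : P.degree < #(insert 0 s) := by
    rw [card_insert_of_notMem hs]
    exact (degree_le_of_natDegree_le hnat).trans_lt (by exact_mod_cast Nat.lt_succ_self _)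
  have hcoeff : P.coeff #s = τ ^ #s := by
    simpa using coeff_prod_of_natDegree_le (s := s) _ 1 hlin
  have hne : ∀ y ∈ s, y ≠ 0 := fun y hy h => hs (h ▸ hy)
  have hat0 : P.eval 0 / ∏ y ∈ s, (0 - y) = 1 := by
    rw [eval_prod, div_eq_one_iff_eq (prod_ne_zero_iff.2 fun y hy => by simpa using hne y hy)]
    simp
  have hat : ∀ x ∈ s, P.eval x / ∏ y ∈ (insert 0 s).erase x, (x - y)
      = (τ - 1) * ∏ y ∈ s.erase x, (y - τ * x) / (y - x) := by
    intro x hx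
    have hflip : ∏ y ∈ s.erase x, (y - τ * x) / (y - x)
        = (∏ y ∈ s.erase x, (τ * x - y)) / ∏ y ∈ s.erase x, (x - y) := by
      rw [← prod_div_distrib]
      exact prod_congr rfl fun y _ => by rw [← neg_div_neg_eq, neg_sub, neg_sub]
    have hB : ∏ y ∈ s.erase x, (x - y) ≠ 0 :=
      prod_ne_zero_iff.2 fun y hy => sub_ne_zero.2 (ne_of_mem_erase hy).symm
    rw [erase_insert_of_ne (Ne.symm (hne x hx)), prod_insert (fun h => hs (mem_of_mem_erase h)),
      eval_prod, ← mul_prod_erase s _ hx, hflip]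
    simp only [eval_sub, eval_mul, eval_C, eval_X, sub_zero]
    field_simp [hne x hx]
  have key := Lagrange.coeff_eq_sum (v := id) Function.injective_id.injOn hdeg
  rw [card_insert_of_notMem hs, add_tsub_cancel_right, hcoeff, sum_insert hs,
    erase_insert hs] at key
  simp only [id, hat0] at key
  rw [sum_congr rfl hat, ← mul_sum] at key
  apply mul_left_cancel₀ (sub_ne_zero.2 hτ)
  linear_combination -key - geom_sum_mul τ #s

theorem sum_prod_erase_sub_mul_div_sub_of_injective {ι : Type*} [Fintype ι] [DecidableEq ι]
    {z : ι → K} (hz : Function.Injective z) (h0 : ∀ i, z i ≠ 0) {τ : K} (hτ : τ ≠ 1) :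
    ∑ i, ∏ j ∈ univ.erase i, (z j - τ * z i) / (z j - z i)
      = ∑ m ∈ range (Fintype.card ι), τ ^ m := by
  classical
  have key := sum_prod_erase_sub_mul_div_sub (s := univ.map ⟨z, hz⟩) (by simpa using h0) hτ
  simp_rw [sum_map, ← map_erase, prod_map, card_map, card_univ] at key
  exact key

open Equiv in
theorem sum_perm_prod_Ioi_sub_mul_div_sub {τ : K} (hτ : τ ≠ 1) {n : ℕ} {z : Fin n → K}
    (hz : Function.Injective z) (h0 : ∀ i, z i ≠ 0) :
    ∑ σ : Perm (Fin n), ∏ i, ∏ j ∈ Ioi i, (z (σ j) - τ * z (σ i)) / (z (σ j) - z (σ i))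
      = ∏ m ∈ range n, ∑ l ∈ range (m + 1), τ ^ l := by
  induction n with
  | zero => simp
  | succ n ih =>
    rw [← Perm.decomposeFin.symm.sum_comp, Fintype.sum_prod_type]
    have hinj : ∀ p : Fin (n + 1), Function.Injective fun l : Fin n => z (swap 0 p l.succ) :=
      fun p => hz.comp ((swap 0 p).injective.comp (Fin.succ_injective _))
    have hrest := fun p => ih (hinj p) (fun _ => h0 _)
    simp_rw [prod_prod_Ioi_decomposeFin_symm (fun a b => (z b - τ * z a) / (z b - z a)),
      ← mul_sum, hrest, ← sum_mul, sum_prod_erase_sub_mul_div_sub_of_injective hz h0 hτ,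
      Fintype.card_fin, prod_range_succ]
    ring

open Equiv in
theorem sum_perm_prod_Ioi_sub_div_sub_mul_eq {τ : K} (hτ : τ ≠ 1) {n : ℕ} {z : Fin n → K}
    (hz : Function.Injective z) (hpole : ∀ i j, z i ≠ τ * z j) :
    ∑ σ : Perm (Fin n), ∏ i, ∏ j ∈ Ioi i, (z (σ i) - z (σ j)) / (z (σ i) - τ * z (σ j))
      = (∏ i, ∏ j ∈ univ.erase i, (z i - z j) / (z i - τ * z j))
        * ∏ m ∈ range n, ∑ l ∈ range (m + 1), τ ^ l := by
  have h0 : ∀ i, z i ≠ 0 := fun i h => hpole i i (by simp [h])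
  rw [← sum_perm_prod_Ioi_sub_mul_div_sub hτ hz h0, mul_sum]
  refine sum_congr rfl fun σ _ => ?_
  set r : Fin n → Fin n → K := fun a b => (z a - z b) / (z a - τ * z b)
  have hr : ∀ i, ∀ j ∈ Ioi i, r (σ j) (σ i) ≠ 0 := fun i j hj =>
    div_ne_zero (sub_ne_zero.2 (hz.ne (σ.injective.ne (mem_Ioi.1 hj).ne')))
      (sub_ne_zero.2 (hpole _ _))
  have hsplit : ∏ i, ∏ j ∈ univ.erase i, r i j
      = (∏ i, ∏ j ∈ Ioi i, r (σ i) (σ j)) * ∏ i, ∏ j ∈ Ioi i, r (σ j) (σ i) := by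
    rw [← prod_prod_erase_comp_perm σ, prod_prod_erase_eq_prod_prod_Ioi_mul]
    simp_rw [prod_mul_distrib]
  have hinv : ∏ i, ∏ j ∈ Ioi i, (z (σ j) - τ * z (σ i)) / (z (σ j) - z (σ i))
      = (∏ i, ∏ j ∈ Ioi i, r (σ j) (σ i))⁻¹ := by
    simp only [r, ← prod_inv_distrib, inv_div]
  rw [hsplit, hinv, mul_assoc, mul_inv_cancel₀ (prod_ne_zero_iff.2 fun i _ =>
    prod_ne_zero_iff.2 (hr i)), mul_one]

open Matrix

theorem det_cauchy_succ {n : ℕ} {x y : Fin (n + 1) → K} (h : ∀ i j, x i ≠ y j) :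
    det (of fun i j => (x i - y j)⁻¹)
      = (x 0 - y 0)⁻¹ * (∏ i : Fin n, (x 0 - x i.succ) / (x i.succ - y 0))
        * det (of fun i j : Fin n => (x i.succ - y j.succ)⁻¹)
        * ∏ j : Fin n, (y j.succ - y 0) / (x 0 - y j.succ) := by
  have hne : ∀ i j, x i - y j ≠ 0 := fun i j => sub_ne_zero.2 (h i j)
  -- Subtracting `(x 0 - y 0) / (x i - y 0)` times row `0` from row `i` clears column `0` and
  -- leaves a Cauchy matrix rescaled by rows and columns.
  set c : Fin (n + 1) → K := Fin.cons 0 fun i => -((x 0 - y 0) / (x i.succ - y 0))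
  set A : Matrix (Fin (n + 1)) (Fin (n + 1)) K :=
    of fun i j => (x i - y j)⁻¹ + c i * (x 0 - y j)⁻¹
  have hrow : det A = det (of fun i j => (x i - y j)⁻¹) :=
    det_eq_of_forall_row_eq_smul_add_const c 0 rfl fun _ _ => rfl
  have hA : ∀ (i : Fin n) j, A i.succ j
      = (x 0 - x i.succ) / (x i.succ - y 0) * (x i.succ - y j)⁻¹ * ((y j - y 0) / (x 0 - y j)) :=
    fun i j => by
    have := hne i.succ j; have := hne i.succ 0; have := hne 0 j
    simp only [A, c, of_apply, Fin.cons_succ]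
    field_simp
    ring
  have hsub : A.submatrix Fin.succ Fin.succ
      = diagonal (fun i : Fin n => (x 0 - x i.succ) / (x i.succ - y 0))
        * of (fun i j : Fin n => (x i.succ - y j.succ)⁻¹)
        * diagonal (fun j : Fin n => (y j.succ - y 0) / (x 0 - y j.succ)) := by
    ext i j
    simp [hA]
  rw [← hrow, det_succ_column_zero, Fin.sum_univ_succ]
  simp only [of_apply, A, c, Fin.cons_zero, zero_mul, add_zero, Fin.val_zero, pow_zero, one_mul,
    Fin.succAbove_zero, hsub, det_mul, det_diagonal, hA, sub_self, zero_div, mul_zero,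
    sum_const_zero]
  ring

theorem det_cauchy {n : ℕ} {x y : Fin n → K} (h : ∀ i j, x i ≠ y j) :
    det (of fun i j => (x i - y j)⁻¹)
      = (∏ i, ∏ j ∈ Ioi i, (x j - x i) * (y i - y j)) / ∏ i, ∏ j, (x i - y j) := by
  induction n with
  | zero => simp
  | succ n ih =>
    have hsign : ∏ j : Fin n, (x j.succ - x 0) * (y 0 - y j.succ)
        = ∏ j : Fin n, (x 0 - x j.succ) * (y j.succ - y 0) :=
      prod_congr rfl fun _ _ => by ring
    have hne : ∀ i j, x i - y j ≠ 0 := fun i j => sub_ne_zero.2 (h i j)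
    have h1 : ∏ i : Fin n, (x i.succ - y 0) ≠ 0 := prod_ne_zero_iff.2 fun _ _ => hne _ _
    have h2 : ∏ j : Fin n, (x 0 - y j.succ) ≠ 0 := prod_ne_zero_iff.2 fun _ _ => hne _ _
    have h3 : ∏ i : Fin n, ∏ j : Fin n, (x i.succ - y j.succ) ≠ 0 :=
      prod_ne_zero_iff.2 fun _ _ => prod_ne_zero_iff.2 fun _ _ => hne _ _
    rw [det_cauchy_succ h, ih fun i j => h _ _]
    simp only [Fin.prod_univ_succ, Fin.prod_Ioi_zero, Fin.prod_Ioi_succ]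
    rw [hsign]
    simp only [prod_mul_distrib, prod_div_distrib]
    field_simp [hne 0 0]

theorem det_inv_sub_mul_eq {τ : K} {n : ℕ} {z : Fin n → K} (hpole : ∀ i j, z i ≠ τ * z j) :
    det (of fun i j => (z i - τ * z j)⁻¹)
      = τ ^ n.choose 2 * (∏ i, ∏ j ∈ univ.erase i, (z i - z j) / (z i - τ * z j))
        / ((1 - τ) ^ n * ∏ i, z i) := by
  have hcauchy := det_cauchy (x := z) (y := fun j => τ * z j) hpole
  beta_reduce at hcauchy
  have hnum : ∏ i, ∏ j ∈ Ioi i, (z j - z i) * (τ * z i - τ * z j)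
      = τ ^ n.choose 2 * ∏ i, ∏ j ∈ univ.erase i, (z i - z j) := by
    have hpow := prod_prod_Ioi_const (ι := Fin n) τ
    rw [Fintype.card_fin] at hpow
    rw [prod_prod_erase_eq_prod_prod_Ioi_mul, ← hpow, ← prod_mul_distrib]
    simp_rw [← prod_mul_distrib]
    exact prod_congr rfl fun _ _ => prod_congr rfl fun _ _ => by ring
  have hden : ∏ i, ∏ j, (z i - τ * z j)
      = (1 - τ) ^ n * (∏ i, z i) * ∏ i, ∏ j ∈ univ.erase i, (z i - τ * z j) := by
    calc ∏ i, ∏ j, (z i - τ * z j)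
        = ∏ i, ((1 - τ) * z i * ∏ j ∈ univ.erase i, (z i - τ * z j)) :=
          prod_congr rfl fun i _ => by rw [← mul_prod_erase univ _ (mem_univ i)]; ring
      _ = _ := by
          rw [prod_mul_distrib, prod_mul_distrib, prod_const, card_univ, Fintype.card_fin]
  rw [hcauchy, hnum, hden]
  simp only [prod_div_distrib]
  ring

theorem prod_range_one_sub_pow_succ {R : Type*} [CommRing R] (τ : R) (n : ℕ) :
    ∏ j ∈ range n, (1 - τ ^ (j + 1))
      = (1 - τ) ^ n * ∏ m ∈ range n, ∑ l ∈ range (m + 1), τ ^ l := by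
  simp_rw [← mul_neg_geom_sum, prod_mul_distrib, prod_const, card_range]

theorem symmetrization_identity_one_general (τ : ℝ) (h0 : 0 < τ) (h1 : τ < 1)
    (k : ℕ) (z : Fin k → ℂ) (hdist : Function.Injective z)
    (hpole : ∀ i j, z i ≠ (τ : ℂ) * z j) :
    ∑ σ : Equiv.Perm (Fin k),
        ∏ p ∈ Finset.univ.filter (fun p : Fin k × Fin k => p.1 < p.2),
          (z (σ p.1) - z (σ p.2)) / (z (σ p.1) - (τ : ℂ) * z (σ p.2))
      = (∏ j ∈ Finset.range k, (1 - (τ : ℂ) ^ (j + 1))) * (τ : ℂ) ^ (-(k * (k - 1) / 2 : ℤ))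
          * (∏ i, z i)
          * Matrix.det (Matrix.of fun i j : Fin k => (z i - (τ : ℂ) * z j)⁻¹) := by
  have hτ0 : (τ : ℂ) ≠ 0 := Complex.ofReal_ne_zero.2 h0.ne'
  have hτ1 : (τ : ℂ) ≠ 1 := Complex.ofReal_ne_one.2 h1.ne
  have hz0 : ∏ i, z i ≠ 0 := prod_ne_zero_iff.2 fun i _ h => hpole i i (by simp [h])
  have hexp : (k * (k - 1) / 2 : ℤ) = (k.choose 2 : ℕ) := by
    rw [Nat.choose_two_right]
    rcases k with _ | k
    · rfl
    · push_cast [Nat.add_sub_cancel]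
      ring_nf
  simp only [prod_filter_fst_lt_snd]
  rw [sum_perm_prod_Ioi_sub_div_sub_mul_eq hτ1 hdist hpole, det_inv_sub_mul_eq hpole,
    prod_range_one_sub_pow_succ, hexp, _root_.zpow_neg, zpow_natCast]
  generalize ∏ i, ∏ j ∈ univ.erase i, (z i - z j) / (z i - τ * z j) = c
  field_simp [sub_ne_zero.2 hτ1.symm]

/-- For 0 < τ < 1, k ≥ 1, and distinct complex z_1,…,z_k avoiding poles:
∑_{σ ∈ S_k} ∏_{A<B} (z_{σ(A)} − z_{σ(B)})/(z_{σ(A)} − τ z_{σ(B)})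
  = (τ;τ)_k τ^{−k(k−1)/2} z_1⋯z_k det[1/(z_i − τ z_j)]. -/
theorem symmetrization_identity_one (τ : ℝ) (h0 : 0 < τ) (h1 : τ < 1)
    (k : ℕ) (hk : 1 ≤ k) (z : Fin k → ℂ) (hdist : Function.Injective z)
    (hpole : ∀ i j, z i ≠ (τ : ℂ) * z j) :
    ∑ σ : Equiv.Perm (Fin k),
        ∏ p ∈ Finset.univ.filter (fun p : Fin k × Fin k => p.1 < p.2),
          (z (σ p.1) - z (σ p.2)) / (z (σ p.1) - (τ : ℂ) * z (σ p.2))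
      = (∏ j ∈ Finset.range k, (1 - (τ : ℂ) ^ (j + 1))) * (τ : ℂ) ^ (-(k * (k - 1) / 2 : ℤ))
          * (∏ i, z i)
          * Matrix.det (Matrix.of fun i j : Fin k => (z i - (τ : ℂ) * z j)⁻¹) :=
  symmetrization_identity_one_general τ h0 h1 k z hdist hpole
end

section
/- For 0 < τ < 1 and complex ξ_1, …, ξ_k with appropriate non-degeneracy, setting p, q with p + q = 1 and τ = p/q: ∑_{σ ∈ S_k} sgn(σ) ∏_{1 ≤ A < B ≤ k}(p + q ξ_{σ(B)} ξ_{σ(A)} − ξ_{σ(A)}) ∏_{i=1}^{k} 1/(ξ_{σ(1)} ⋯ ξ_{σ(i)} − 1) = q^{k(k−1)/2} ∏_{A<B}(ξ_B − ξ_A) / ∏_{i=1}^{k}(ξ_i − 1). -/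
/-!
Dividing the summand of `σ` by the Vandermonde product of `ξ ∘ σ`, which is `sgn σ` times that
of `ξ`, turns the alternating sum into a plain sum of weights over all orderings of the `ξ_i`.
Grouping the orderings by their last entry `ξ_m`, a weight factors as the weight of the remaining
ordering times a factor depending only on `m`, so induction on `k` reduces the identity to
`∑ m, (ξ_m - 1) ∏_{a ≠ m} (p + q ξ_m ξ_a - ξ_a) / (ξ_m - ξ_a) = q ^ (k - 1) (ξ_1 ⋯ ξ_k - 1)`.
This is Lagrange interpolation, read off in the top coefficient, of the polynomial
`∏_a (q ξ_a z + p - ξ_a) - ∏_a (q z - q ξ_a)` of degree `k` at the nodes `p / q, ξ_1, …, ξ_k`: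
it vanishes at `p / q` because `p + q = 1`.
All this needs the `ξ_i` distinct and different from `p / q`. In general, `ξ + ε c` has these
properties for all small `ε ≠ 0`, and both sides of the identity are continuous at `ξ`.
-/

open Finset Polynomial Equiv Filter Topology

namespace Fin

variable {M : Type*} [CommMonoid M] {n : ℕ}

theorem Iic_last_eq_univ : Iic (last n) = univ := by
  rw [← top_eq_last, Iic_top]

theorem prod_succAbove_eq_prod_erase (m : Fin (n + 1)) (f : Fin (n + 1) → M) :
    ∏ i : Fin n, f (m.succAbove i) = ∏ a ∈ univ.erase m, f a := by
  rw [← compl_singleton, ← image_succAbove_univ, prod_image succAbove_right_injective.injOn]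

theorem prod_filter_fst_lt_snd (f : Fin n × Fin n → M) :
    ∏ pr ∈ univ.filter (fun pr : Fin n × Fin n => pr.1 < pr.2), f pr = ∏ j, ∏ i < j, f (i, j) := by
  rw [prod_filter, Fintype.prod_prod_type_right]
  simp [← prod_filter, filter_gt_eq_Iio]

theorem prod_prod_Ioi_eq_prod_prod_Iio (g : Fin n → Fin n → M) :
    ∏ i, ∏ j ∈ Ioi i, g i j = ∏ j, ∏ i < j, g i j :=
  prod_comm' (by simp)

theorem prod_prod_Iio_castSucc (g : Fin (n + 1) → Fin (n + 1) → M) :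
    ∏ j, ∏ i < j, g i j
      = (∏ j : Fin n, ∏ i < j, g i.castSucc j.castSucc) * ∏ i : Fin n, g i.castSucc (last n) := by
  simp [prod_univ_castSucc, prod_Iio_castSucc]

theorem prod_prod_Iio_sub_comp_perm {R : Type*} [CommRing R] (x : Fin n → R) (σ : Perm (Fin n)) :
    ∏ j, ∏ i < j, (x (σ j) - x (σ i)) = Perm.sign σ * ∏ j, ∏ i < j, (x j - x i) := by
  rw [← prod_prod_Ioi_eq_prod_prod_Iio, ← prod_prod_Ioi_eq_prod_prod_Iio,
    ← Matrix.det_vandermonde, ← Matrix.det_vandermonde, ← Matrix.det_permute]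
  rfl

end Fin

namespace Equiv.Perm

variable {n : ℕ}

def insertLast (m : Fin (n + 1)) (e : Perm (Fin n)) : Perm (Fin (n + 1)) :=
  finSuccEquivLast.trans ((optionCongr (e.trans (finSuccAboveEquiv m))).trans (optionSubtypeNe m))

@[simp] theorem insertLast_last (m : Fin (n + 1)) (e : Perm (Fin n)) :
    insertLast m e (Fin.last n) = m := by
  simp [insertLast]

@[simp] theorem insertLast_castSucc (m : Fin (n + 1)) (e : Perm (Fin n)) (i : Fin n) :
    insertLast m e i.castSucc = m.succAbove (e i) := by
  simp [insertLast, finSuccAboveEquiv_apply]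

theorem bijective_insertLast :
    Function.Bijective fun me : Fin (n + 1) × Perm (Fin n) => insertLast me.1 me.2 := by
  refine (Fintype.bijective_iff_injective_and_card _).2
    ⟨?_, by simp [Fintype.card_perm, Nat.factorial_succ]⟩
  rintro ⟨m, e⟩ ⟨m', e'⟩ h
  obtain rfl : m = m' := by simpa using DFunLike.congr_fun h (Fin.last n)
  simp only [Prod.mk.injEq, true_and]
  exact Equiv.ext fun i => by simpa using DFunLike.congr_fun h i.castSucc

theorem sum_eq_sum_insertLast {A : Type*} [AddCommMonoid A] (F : Perm (Fin (n + 1)) → A) :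
    ∑ σ, F σ = ∑ m, ∑ e : Perm (Fin n), F (insertLast m e) := by
  rw [← Fintype.sum_prod_type']
  exact (Fintype.sum_bijective _ bijective_insertLast _ _ fun _ => rfl).symm

end Equiv.Perm

namespace Polynomial

variable {K : Type*} [Field K] {ι : Type*} [Fintype ι] (a b : ι → K)

theorem natDegree_prod_linear_le : (∏ i, (C (a i) * X + C (b i))).natDegree ≤ Fintype.card ι :=
  (natDegree_prod_le _ _).trans <|
    (sum_le_card_nsmul _ _ 1 fun _ _ => natDegree_linear_le).trans (by simp)

theorem coeff_prod_linear_card :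
    (∏ i, (C (a i) * X + C (b i))).coeff (Fintype.card ι) = ∏ i, a i := by
  simpa using coeff_prod_of_natDegree_le (s := univ) _ 1 fun i _ =>
    natDegree_linear_le (a := a i) (b := b i)

end Polynomial

section Perturbation

variable {K : Type*} [Field K] [TopologicalSpace K] [T1Space K] {ι : Type*} [Finite ι]

theorem eventually_add_mul_ne_zero {α β : K} (hβ : β ≠ 0) :
    ∀ᶠ ε in 𝓝[≠] (0 : K), α + ε * β ≠ 0 :=
  ((eventually_cofinite_ne (-α / β)).filter_mono (nhdsNE_le_cofinite 0)).mono fun ε hε h =>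
    hε (by field_simp; linear_combination h)

theorem eventually_injective_add_mul (ξ : ι → K) {c : ι → K} (hc : Function.Injective c) :
    ∀ᶠ ε in 𝓝[≠] (0 : K), Function.Injective fun i => ξ i + ε * c i := by
  have : ∀ᶠ ε in 𝓝[≠] (0 : K), ∀ a b, a ≠ b → ξ a + ε * c a ≠ ξ b + ε * c b := by
    refine eventually_all.2 fun a => eventually_all.2 fun b => ?_
    by_cases hab : a = b
    · exact Eventually.of_forall fun _ h => (h hab).elim
    · filter_upwards [eventually_add_mul_ne_zero (α := ξ a - ξ b) (sub_ne_zero.2 (hc.ne hab))]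
        with ε hε _ h
      exact hε (by linear_combination h)
  exact this.mono fun ε h a b hab => not_not.1 fun hne => h a b hne hab

theorem eventually_forall_add_mul_ne (ξ a : ι → K) {c : ι → K} (hc : ∀ i, c i ≠ 0) :
    ∀ᶠ ε in 𝓝[≠] (0 : K), ∀ i, ξ i + ε * c i ≠ a i :=
  eventually_all.2 fun i => (eventually_add_mul_ne_zero (α := ξ i - a i) (hc i)).mono
    fun ε hε h => hε (by linear_combination h)

end Perturbation

section TracyWidom

variable {K : Type*} [Field K] {p q : K}

section Poly

variable {ι : Type*} [Fintype ι] {x : ι → K}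

variable (p q x) in
noncomputable def tracyWidomPoly : K[X] :=
  ∏ a, (C (q * x a) * X + C (p - x a)) - ∏ a, (C q * X + C (-(q * x a)))

theorem natDegree_tracyWidomPoly_le : (tracyWidomPoly p q x).natDegree ≤ Fintype.card ι :=
  (natDegree_sub_le _ _).trans
    (max_le (natDegree_prod_linear_le _ _) (natDegree_prod_linear_le _ _))

theorem coeff_tracyWidomPoly_card :
    (tracyWidomPoly p q x).coeff (Fintype.card ι) = q ^ Fintype.card ι * ((∏ a, x a) - 1) := by
  rw [tracyWidomPoly, coeff_sub, coeff_prod_linear_card, coeff_prod_linear_card,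
    prod_mul_distrib, prod_const, card_univ]
  ring

theorem eval_tracyWidomPoly_div (hq : q ≠ 0) (hpq : p + q = 1) :
    (tracyWidomPoly p q x).eval (p / q) = 0 := by
  simp only [tracyWidomPoly, eval_sub, eval_prod, eval_add, eval_mul, eval_C, eval_X, sub_eq_zero]
  refine prod_congr rfl fun a _ => ?_
  field_simp
  linear_combination x a * hpq

theorem eval_tracyWidomPoly_node [DecidableEq ι] (hpq : p + q = 1) (m : ι) :
    (tracyWidomPoly p q x).eval (x m)
      = (q * x m - p) * (x m - 1) * ∏ a ∈ univ.erase m, (p + q * x m * x a - x a) := by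
  have hH : ∏ a, (q * x m + -(q * x a)) = 0 := prod_eq_zero (mem_univ m) (by ring)
  simp only [tracyWidomPoly, eval_sub, eval_prod, eval_add, eval_mul, eval_C, eval_X]
  rw [hH, sub_zero, ← mul_prod_erase _ _ (mem_univ m)]
  congr 1
  · linear_combination x m * hpq
  · exact prod_congr rfl fun a _ => by ring

end Poly

theorem sum_mul_prod_succAbove_div (hq : q ≠ 0) (hpq : p + q = 1) {n : ℕ} {x : Fin (n + 1) → K}
    (hx : Function.Injective x) (hxq : ∀ i, q * x i ≠ p) :
    ∑ m, (x m - 1) * ∏ i, (p + q * x m * x (m.succAbove i) - x (m.succAbove i))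
        / (x m - x (m.succAbove i))
      = q ^ n * ((∏ a, x a) - 1) := by
  have hxt : ∀ m, x m - p / q ≠ 0 := fun m h =>
    hxq m (by rw [sub_eq_zero.1 h, mul_div_cancel₀ p hq])
  let v : Fin (n + 2) → K := Fin.cons (p / q) x
  have hv : Function.Injective v :=
    Fin.cons_injective_iff.2 ⟨fun ⟨m, hm⟩ => hxt m (sub_eq_zero.2 hm), hx⟩
  have hdeg : (tracyWidomPoly p q x).degree < #(univ : Finset (Fin (n + 2))) := by
    have := natDegree_tracyWidomPoly_le (p := p) (q := q) (x := x)
    refine degree_le_natDegree.trans_lt ?_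
    simp only [card_univ, Fintype.card_fin] at this ⊢
    exact_mod_cast Nat.lt_succ_of_le this
  have hden : ∀ m, ∏ j ∈ univ.erase m.succ, (x m - v j)
      = (x m - p / q) * ∏ i, (x m - x (m.succAbove i)) := fun m => by
    simp [v, ← Fin.prod_succAbove_eq_prod_erase, Fin.prod_univ_succ]
  have hL := Lagrange.coeff_eq_sum (s := univ) hv.injOn hdeg
  rw [card_univ, Fintype.card_fin, Nat.add_succ_sub_one, Fin.sum_univ_succ] at hL
  have hcoeff := coeff_tracyWidomPoly_card (p := p) (q := q) (x := x)
  rw [Fintype.card_fin] at hcoeff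
  simp only [v, Fin.cons_zero, Fin.cons_succ, eval_tracyWidomPoly_div hq hpq, zero_div, zero_add,
    hden, eval_tracyWidomPoly_node hpq, ← Fin.prod_succAbove_eq_prod_erase, hcoeff] at hL
  refine mul_left_cancel₀ hq ?_
  rw [← mul_assoc, ← pow_succ', hL, mul_sum]
  refine sum_congr rfl fun m _ => ?_
  have hd : ∏ i, (x m - x (m.succAbove i)) ≠ 0 :=
    prod_ne_zero_iff.2 fun i _ => sub_ne_zero.2 (hx.ne (Fin.succAbove_ne m i).symm)
  have hxm : x m - p / q ≠ 0 := hxt m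
  have hqxm : q * x m - p ≠ 0 := sub_ne_zero.2 (hxq m)
  rw [prod_div_distrib]
  field_simp

variable (p q) in
def tracyWidomWeight {n : ℕ} (y : Fin n → K) : K :=
  (∏ j, ∏ i < j, (p + q * y j * y i - y i) / (y j - y i)) * ∏ i, ((∏ j ≤ i, y j) - 1)⁻¹

theorem mul_tracyWidomWeight {n : ℕ} {y : Fin n → K} (hy : Function.Injective y) :
    (∏ j, ∏ i < j, (y j - y i)) * tracyWidomWeight p q y
      = (∏ j, ∏ i < j, (p + q * y j * y i - y i)) * ∏ i, ((∏ j ≤ i, y j) - 1)⁻¹ := by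
  have hV : ∏ j, ∏ i < j, (y j - y i) ≠ 0 := prod_ne_zero_iff.2 fun j _ =>
    prod_ne_zero_iff.2 fun i hi => sub_ne_zero.2 (hy.ne (mem_Iio.1 hi).ne')
  simp only [tracyWidomWeight, prod_div_distrib]
  field_simp

theorem tracyWidomWeight_succ {n : ℕ} (y : Fin (n + 1) → K) :
    tracyWidomWeight p q y = tracyWidomWeight p q (fun i => y i.castSucc)
      * (∏ i : Fin n, (p + q * y (Fin.last n) * y i.castSucc - y i.castSucc)
          / (y (Fin.last n) - y i.castSucc))
      * ((∏ j, y j) - 1)⁻¹ := by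
  rw [tracyWidomWeight, tracyWidomWeight, Fin.prod_prod_Iio_castSucc,
    Fin.prod_univ_castSucc (n := n), Fin.Iic_last_eq_univ]
  simp only [Fin.prod_Iic_castSucc]
  ring

theorem sum_tracyWidomWeight_comp_insertLast {n : ℕ} (x : Fin (n + 1) → K) (m : Fin (n + 1)) :
    ∑ e : Perm (Fin n), tracyWidomWeight p q (x ∘ Perm.insertLast m e)
      = (∑ e : Perm (Fin n), tracyWidomWeight p q (x ∘ m.succAbove ∘ e))
        * (∏ i, (p + q * x m * x (m.succAbove i) - x (m.succAbove i)) / (x m - x (m.succAbove i)))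
        * ((∏ a, x a) - 1)⁻¹ := by
  rw [sum_mul, sum_mul]
  refine sum_congr rfl fun e _ => ?_
  rw [tracyWidomWeight_succ]
  simp only [Function.comp_apply, Perm.insertLast_last, Perm.insertLast_castSucc]
  rw [Equiv.prod_comp (Perm.insertLast m e) x, Equiv.prod_comp e
    (fun i => (p + q * x m * x (m.succAbove i) - x (m.succAbove i)) / (x m - x (m.succAbove i)))]
  rfl

theorem sum_tracyWidomWeight_comp_perm (hq : q ≠ 0) (hpq : p + q = 1) {k : ℕ} {x : Fin k → K}
    (hx : Function.Injective x) (hxq : ∀ i, q * x i ≠ p) (hx1 : ∀ i, x i ≠ 1)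
    (hpre : ∀ (σ : Perm (Fin k)) i, ∏ j ≤ i, x (σ j) ≠ 1) :
    ∑ σ : Perm (Fin k), tracyWidomWeight p q (x ∘ σ) = q ^ (k * (k - 1) / 2) / ∏ i, (x i - 1) := by
  induction k with
  | zero => simp [tracyWidomWeight]
  | succ n ih =>
    have hIH : ∀ m : Fin (n + 1), ∑ e : Perm (Fin n), tracyWidomWeight p q (x ∘ m.succAbove ∘ e)
        = q ^ (n * (n - 1) / 2) / ∏ i, (x (m.succAbove i) - 1) := fun m =>
      ih (x := x ∘ m.succAbove) (hx.comp Fin.succAbove_right_injective) (fun i => hxq _)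
        (fun i => hx1 _) fun e i => by
          simpa [Fin.prod_Iic_castSucc] using hpre (Perm.insertLast m e) i.castSucc
    have hprod : (∏ a, x a) - 1 ≠ 0 := by
      simpa [Fin.Iic_last_eq_univ, sub_eq_zero] using hpre 1 (Fin.last n)
    have hD : ∏ a, (x a - 1) ≠ 0 := prod_ne_zero_iff.2 fun a _ => sub_ne_zero.2 (hx1 a)
    simp only [Perm.sum_eq_sum_insertLast, sum_tracyWidomWeight_comp_insertLast, hIH]
    calc _ = q ^ (n * (n - 1) / 2) / (∏ a, (x a - 1)) * ((∏ a, x a) - 1)⁻¹ *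
          ∑ m, (x m - 1) * ∏ i, (p + q * x m * x (m.succAbove i) - x (m.succAbove i))
            / (x m - x (m.succAbove i)) := by
          rw [mul_sum]
          refine sum_congr rfl fun m _ => ?_
          have hm : x m - 1 ≠ 0 := sub_ne_zero.2 (hx1 m)
          rw [Fin.prod_univ_succAbove (fun a => x a - 1) m] at hD ⊢
          field_simp
      _ = _ := by
          rw [sum_mul_prod_succAbove_div hq hpq hx hxq, ← sum_range_id, ← sum_range_id,
            sum_range_succ, pow_add]
          field_simp

variable (p q) in
def tracyWidomSum {k : ℕ} (x : Fin k → K) : K :=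
  ∑ σ : Perm (Fin k), ((Perm.sign σ : ℤ) : K)
    * (∏ j, ∏ i < j, (p + q * x (σ j) * x (σ i) - x (σ i))) * ∏ i, ((∏ j ≤ i, x (σ j)) - 1)⁻¹

theorem tracyWidomSum_eq_of_injective (hq : q ≠ 0) (hpq : p + q = 1) {k : ℕ} {x : Fin k → K}
    (hx : Function.Injective x) (hxq : ∀ i, q * x i ≠ p) (hx1 : ∀ i, x i ≠ 1)
    (hpre : ∀ (σ : Perm (Fin k)) i, ∏ j ≤ i, x (σ j) ≠ 1) :
    tracyWidomSum p q x
      = q ^ (k * (k - 1) / 2) * (∏ j, ∏ i < j, (x j - x i)) / ∏ i, (x i - 1) := by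
  have hterm : ∀ σ : Perm (Fin k), ((Perm.sign σ : ℤ) : K)
      * (∏ j, ∏ i < j, (p + q * x (σ j) * x (σ i) - x (σ i))) * ∏ i, ((∏ j ≤ i, x (σ j)) - 1)⁻¹
      = (∏ j, ∏ i < j, (x j - x i)) * tracyWidomWeight p q (x ∘ σ) := fun σ => by
    have hs : ((Perm.sign σ : ℤ) : K) * (Perm.sign σ : ℤ) = 1 := by
      rw [← Int.cast_mul, ← Units.val_mul, Int.units_mul_self, Units.val_one, Int.cast_one]
    have hw := mul_tracyWidomWeight (p := p) (q := q) (hx.comp σ.injective)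
    simp only [Function.comp_apply, Fin.prod_prod_Iio_sub_comp_perm x σ] at hw
    rw [mul_assoc, ← hw, ← mul_assoc, ← mul_assoc, hs, one_mul]
  rw [tracyWidomSum, sum_congr rfl fun σ _ => hterm σ, ← mul_sum,
    sum_tracyWidomWeight_comp_perm hq hpq hx hxq hx1 hpre]
  ring

end TracyWidom

theorem continuousAt_tracyWidomSum {K : Type*} [Field K] [TopologicalSpace K]
    [IsTopologicalDivisionRing K] (p q : K) {k : ℕ} {x : Fin k → K}
    (hpre : ∀ (σ : Perm (Fin k)) i, ∏ j ≤ i, x (σ j) ≠ 1) : ContinuousAt (tracyWidomSum p q) x :=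
  tendsto_finsetSum _ fun σ _ => ContinuousAt.mul (by fun_prop) <| tendsto_finsetProd _ fun i _ =>
    ContinuousAt.inv₀ (Continuous.continuousAt (by fun_prop)) (sub_ne_zero.2 (hpre σ i))

theorem tracyWidomSum_eq {K : Type*} [NontriviallyNormedField K] [CharZero K] {p q : K}
    (hq : q ≠ 0) (hpq : p + q = 1) {k : ℕ} {ξ : Fin k → K} (hξ : ∀ i, ξ i ≠ 1)
    (hpre : ∀ (σ : Perm (Fin k)) i, ∏ j ≤ i, ξ (σ j) ≠ 1) :
    tracyWidomSum p q ξ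
      = q ^ (k * (k - 1) / 2) * (∏ j, ∏ i < j, (ξ j - ξ i)) / ∏ i, (ξ i - 1) := by
  set rhs : (Fin k → K) → K := fun x =>
    q ^ (k * (k - 1) / 2) * (∏ j, ∏ i < j, (x j - x i)) / ∏ i, (x i - 1)
  have hrhs : ContinuousAt rhs ξ := ContinuousAt.div (by fun_prop)
    (Continuous.continuousAt (by fun_prop)) (prod_ne_zero_iff.2 fun i _ => sub_ne_zero.2 (hξ i))
  let c : Fin k → K := fun i => (i : ℕ) + 1
  let y : K → Fin k → K := fun ε i => ξ i + ε * c i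
  have hy : Tendsto y (𝓝[≠] 0) (𝓝 ξ) :=
    ((by fun_prop : Continuous y).tendsto' 0 ξ (by simp [y])).mono_left nhdsWithin_le_nhds
  have hopen : ∀ᶠ x in 𝓝 ξ, (∀ i, x i ≠ 1) ∧ ∀ (σ : Perm (Fin k)) i, ∏ j ≤ i, x (σ j) ≠ 1 :=
    (eventually_all.2 fun i => (continuous_apply i).continuousAt.eventually_ne (hξ i)).and
      (eventually_all.2 fun σ => eventually_all.2 fun i =>
        (Continuous.continuousAt (by fun_prop)).eventually_ne (hpre σ i))
  have hgen : ∀ᶠ ε in 𝓝[≠] 0, tracyWidomSum p q (y ε) = rhs (y ε) := by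
    have hc : Function.Injective c := fun a b h => Fin.ext (by simpa [c] using h)
    filter_upwards [eventually_injective_add_mul ξ hc,
      eventually_forall_add_mul_ne ξ (fun _ => p / q) (c := c) fun _ => Nat.cast_add_one_ne_zero _,
      hy.eventually hopen] with ε hinj hne ⟨hy1, hypre⟩
    exact tracyWidomSum_eq_of_injective hq hpq hinj
      (fun i h => hne i (eq_div_of_mul_eq hq (by rw [mul_comm]; exact h))) hy1 hypre
  exact tendsto_nhds_unique (((continuousAt_tracyWidomSum p q hpre).tendsto.comp hy).congr' hgen)
    (hrhs.tendsto.comp hy)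

theorem tracy_widom_identity_general (p q : ℝ) (hq : 0 < q) (hpq : p + q = 1)
    (k : ℕ) (ξ : Fin k → ℂ) (hξ : ∀ i, ξ i ≠ 1)
    (hpp : ∀ σ : Equiv.Perm (Fin k), ∀ i : Fin k,
        (∏ j ∈ Finset.univ.filter (fun j : Fin k => j ≤ i), ξ (σ j)) ≠ 1) :
    ∑ σ : Equiv.Perm (Fin k),
        (((Equiv.Perm.sign σ : ℤ) : ℂ)
          * ∏ pr ∈ Finset.univ.filter (fun pr : Fin k × Fin k => pr.1 < pr.2),
              ((p : ℂ) + (q : ℂ) * ξ (σ pr.2) * ξ (σ pr.1) - ξ (σ pr.1)))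
          * ∏ i : Fin k,
              ((∏ j ∈ Finset.univ.filter (fun j : Fin k => j ≤ i), ξ (σ j)) - 1)⁻¹
      = (q : ℂ) ^ (k * (k - 1) / 2)
          * (∏ pr ∈ Finset.univ.filter (fun pr : Fin k × Fin k => pr.1 < pr.2),
              (ξ pr.2 - ξ pr.1))
          / ∏ i : Fin k, (ξ i - 1) := by
  simp only [filter_ge_eq_Iic, Fin.prod_filter_fst_lt_snd] at hpp ⊢
  exact tracyWidomSum_eq (Complex.ofReal_ne_zero.2 hq.ne') (by exact_mod_cast hpq) hξ hpp

/-- Tracy–Widom's identity (1.7). For p, q > 0 with p + q = 1 and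
τ = p/q < 1 (i.e. p < q), and ξ_1,…,ξ_k with ξ_i ≠ 1 and all partial products ≠ 1:
∑_{σ ∈ S_k} sgn(σ) ∏_{A<B}(p + q ξ_{σ(B)} ξ_{σ(A)} − ξ_{σ(A)}) ∏_i 1/(ξ_{σ(1)}⋯ξ_{σ(i)} − 1)
  = q^{k(k−1)/2} ∏_{A<B}(ξ_B − ξ_A) / ∏_i (ξ_i − 1). -/
theorem tracy_widom_identity (p q : ℝ) (hp : 0 < p) (hq : 0 < q) (hpq : p + q = 1)
    (hpltq : p < q) (k : ℕ) (hk : 1 ≤ k) (ξ : Fin k → ℂ) (hξ : ∀ i, ξ i ≠ 1)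
    (hpp : ∀ σ : Equiv.Perm (Fin k), ∀ i : Fin k,
        (∏ j ∈ Finset.univ.filter (fun j : Fin k => j ≤ i), ξ (σ j)) ≠ 1) :
    ∑ σ : Equiv.Perm (Fin k),
        (((Equiv.Perm.sign σ : ℤ) : ℂ)
          * ∏ pr ∈ Finset.univ.filter (fun pr : Fin k × Fin k => pr.1 < pr.2),
              ((p : ℂ) + (q : ℂ) * ξ (σ pr.2) * ξ (σ pr.1) - ξ (σ pr.1)))
          * ∏ i : Fin k,
              ((∏ j ∈ Finset.univ.filter (fun j : Fin k => j ≤ i), ξ (σ j)) - 1)⁻¹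
      = (q : ℂ) ^ (k * (k - 1) / 2)
          * (∏ pr ∈ Finset.univ.filter (fun pr : Fin k × Fin k => pr.1 < pr.2),
              (ξ pr.2 - ξ pr.1))
          / ∏ i : Fin k, (ξ i - 1) :=
  tracy_widom_identity_general p q hq hpq k ξ hξ hpp
end

section
/- Let 0 < τ < 1 and let k ≥ 1 and x be an integer. For complex ξ_1, …, ξ_k with |ξ_i| > 1 for all i: ∑_{x_1 < x_2 < ⋯ < x_k ≤ x} ∏_{i=1}^{k} ξ_i^{x_i − 1} = (ξ_1 ⋯ ξ_k)^{x} ∏_{i=1}^{k} 1/(ξ_1 ⋯ ξ_i − 1), where the sum is over strictly increasing integer sequences x_1 < ⋯ < x_k ≤ x, and the series on the left converges absolutely. -/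
/-!
Splitting off the largest entry `m = x_k ≤ x` leaves an increasing `(k-1)`-tuple bounded by
`m - 1`, so the sum `S_k(x)` equals `∑_{m ≤ x} ξ_k^(m-1) S_{k-1}(m-1)`. By induction the inner
sum is `(ξ_1 ⋯ ξ_{k-1})^(m-1)` times a constant, leaving a geometric series in `ξ_1 ⋯ ξ_k`.
This rearrangement is first justified for real `ξ_i > 1`, where all terms are positive; that
case is the absolute convergence needed for complex `ξ_i`.
-/

open Finset Fin

theorem Fin.strictMono_snoc {α : Type*} [Preorder α] {k : ℕ} {g : Fin k → α} {a : α}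
    (hg : StrictMono g) (hga : ∀ i, g i < a) : StrictMono (snoc g a : Fin (k + 1) → α) := by
  intro i j hij
  induction j using lastCases with
  | last =>
    obtain ⟨i, rfl⟩ := exists_castSucc_eq.mpr hij.ne
    simpa using hga i
  | cast j =>
    obtain ⟨i, rfl⟩ := exists_castSucc_eq.mpr (hij.trans (castSucc_lt_last j)).ne
    simpa using hg (castSucc_lt_castSucc_iff.mp hij)

theorem prod_zpow_snoc {G : Type*} [DivisionCommMonoid G] {k : ℕ} (r : Fin (k + 1) → G)
    (g : Fin k → ℤ) (m : ℤ) :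
    ∏ i, r i ^ ((snoc g m : Fin (k + 1) → ℤ) i - 1) =
      r (last k) ^ (m - 1) * ∏ i, init r i ^ (g i - 1) := by
  simp [prod_univ_castSucc, init, mul_comm]

theorem prod_inv_prod_Iic_sub_one_succ {K : Type*} [Field K] {k : ℕ} (r : Fin (k + 1) → K) :
    ∏ i, ((∏ j ≤ i, r j) - 1)⁻¹ =
      (∏ i, ((∏ j ≤ i, init r j) - 1)⁻¹) * ((∏ i, r i) - 1)⁻¹ := by
  simp [prod_univ_castSucc, prod_Iic_castSucc, init, ← top_eq_last, mul_comm]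

theorem one_lt_norm_prod {ι K : Type*} [Fintype ι] [Nonempty ι] [NormedField K] {r : ι → K}
    (hr : ∀ i, 1 < ‖r i‖) : 1 < ‖∏ i, r i‖ := by
  rw [norm_prod]
  calc (1 : ℝ) = ∏ _i : ι, 1 := prod_const_one.symm
    _ < ∏ i, ‖r i‖ := prod_lt_prod_of_nonempty (fun _ _ => one_pos) (fun i _ => hr i) univ_nonempty

theorem hasSum_zpow_sub_one_of_le {K : Type*} [NormedField K] [CompleteSpace K] (x : ℤ) {p : K}
    (hp : 1 < ‖p‖) :
    HasSum (fun m : {m : ℤ // m ≤ x} => p ^ (m.1 - 1)) (p ^ x * (p - 1)⁻¹) := by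
  have hp0 : p ≠ 0 := norm_pos_iff.mp (one_pos.trans hp)
  let e : ℕ ≃ {m : ℤ // m ≤ x} :=
    { toFun n := ⟨x - n, by omega⟩
      invFun m := (x - m.1).toNat
      left_inv n := by simp
      right_inv m := Subtype.ext (by have := m.2; simp only; omega) }
  have hgeom := (hasSum_geometric_of_norm_lt_one
    (by rw [norm_inv]; exact inv_lt_one_of_one_lt₀ hp)).mul_left (p ^ (x - 1))
  have hterm (n : ℕ) : p ^ (x - n - 1) = p ^ (x - 1) * p⁻¹ ^ n := by
    rw [sub_right_comm, zpow_sub₀ hp0, zpow_natCast, div_eq_mul_inv, inv_pow]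
  have hsum : p ^ (x - 1) * (1 - p⁻¹)⁻¹ = p ^ x * (p - 1)⁻¹ := by
    rw [zpow_sub_one₀ hp0]
    field_simp
  rw [← hsum, ← e.hasSum_iff]
  show HasSum (fun n : ℕ => p ^ (x - n - 1)) _
  simpa only [hterm] using hgeom

theorem HasSum.sigma_of_hasSum_of_nonneg {α : Type*} {β : α → Type*} {f : (Σ a, β a) → ℝ}
    {g : α → ℝ} {s : ℝ} (hg : HasSum g s) (hf : ∀ a, HasSum (fun b => f ⟨a, b⟩) (g a))
    (hf0 : ∀ p, 0 ≤ f p) : HasSum f s :=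
  hg.sigma_of_hasSum hf <| (summable_sigma_of_nonneg hf0).2
    ⟨fun a => (hf a).summable, by simpa only [(hf _).tsum_eq] using hg.summable⟩

abbrev IncreasingTuple (k : ℕ) (x : ℤ) : Type :=
  {f : Fin k → ℤ // StrictMono f ∧ ∀ i, f i ≤ x}

namespace IncreasingTuple

instance (x : ℤ) : Unique (IncreasingTuple 0 x) where
  default := ⟨finZeroElim, fun i => i.elim0, fun i => i.elim0⟩
  uniq _ := Subsingleton.elim _ _

def snocEquiv (k : ℕ) (x : ℤ) :
    IncreasingTuple (k + 1) x ≃ Σ m : {m : ℤ // m ≤ x}, IncreasingTuple k (m - 1) where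
  toFun f := ⟨⟨f.1 (last k), f.2.2 _⟩, init f.1, f.2.1.comp strictMono_castSucc,
    fun i => Int.le_sub_one_of_lt (f.2.1 (castSucc_lt_last i))⟩
  invFun p :=
    have hmono := strictMono_snoc p.2.2.1 fun i => Int.lt_of_le_sub_one (p.2.2.2 i)
    ⟨snoc p.2.1 p.1.1, hmono, fun i => (hmono.monotone (le_last i)).trans (by simpa using p.1.2)⟩
  left_inv f := Subtype.ext (snoc_init_self f.1)
  right_inv p := Sigma.subtype_ext (Subtype.ext (snoc_last (α := fun _ => ℤ) p.1.1 p.2.1))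
    (init_snoc (α := fun _ => ℤ) p.1.1 p.2.1)

variable {K : Type*} [NormedField K] {k : ℕ}

theorem hasSum_prod_zpow_snoc {r : Fin (k + 1) → K}
    (hr : ∀ y, HasSum (fun g : IncreasingTuple k y => ∏ i, init r i ^ (g.1 i - 1))
      ((∏ i, init r i) ^ y * ∏ i, ((∏ j ≤ i, init r j) - 1)⁻¹)) (m : ℤ) :
    HasSum (fun g : IncreasingTuple k (m - 1) =>
        ∏ i, r i ^ ((snoc g.1 m : Fin (k + 1) → ℤ) i - 1))
      ((∏ i, r i) ^ (m - 1) * ∏ i, ((∏ j ≤ i, init r j) - 1)⁻¹) := by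
  rw [prod_univ_castSucc, mul_zpow, mul_comm (_ ^ _) (r (last k) ^ (m - 1)), mul_assoc]
  simp_rw [prod_zpow_snoc]
  exact (hr (m - 1)).mul_left (r (last k) ^ (m - 1))

variable [CompleteSpace K]

theorem hasSum_prod_zpow_last {r : Fin (k + 1) → K} (hr : 1 < ‖∏ i, r i‖) (x : ℤ) :
    HasSum (fun m : {m : ℤ // m ≤ x} =>
        (∏ i, r i) ^ (m.1 - 1) * ∏ i, ((∏ j ≤ i, init r j) - 1)⁻¹)
      ((∏ i, r i) ^ x * ∏ i, ((∏ j ≤ i, r j) - 1)⁻¹) := by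
  rw [prod_inv_prod_Iic_sub_one_succ, mul_comm (∏ i : Fin k, _), ← mul_assoc]
  exact (hasSum_zpow_sub_one_of_le x hr).mul_right _

theorem hasSum_prod_zpow_of_one_lt (x : ℤ) (r : Fin k → ℝ) (hr : ∀ i, 1 < r i) :
    HasSum (fun f : IncreasingTuple k x => ∏ i, r i ^ (f.1 i - 1))
      ((∏ i, r i) ^ x * ∏ i, ((∏ j ≤ i, r j) - 1)⁻¹) := by
  induction k generalizing x with
  | zero => simp
  | succ k ih =>
    have hprod : 1 < ‖∏ i, r i‖ :=
      one_lt_norm_prod fun i => (hr i).trans_le (Real.le_norm_self _)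
    have hpos (f : Fin (k + 1) → ℤ) : 0 ≤ ∏ i, r i ^ (f i - 1) :=
      prod_nonneg fun i _ => (zpow_pos (one_pos.trans (hr i)) _).le
    refine (snocEquiv k x).symm.hasSum_iff.mp <|
      (hasSum_prod_zpow_last hprod x).sigma_of_hasSum_of_nonneg
        (fun m => hasSum_prod_zpow_snoc (fun y => ih y (init r) fun i => hr _) m.1)
        fun _ => hpos _

theorem hasSum_prod_zpow (x : ℤ) (r : Fin k → K) (hr : ∀ i, 1 < ‖r i‖) :
    HasSum (fun f : IncreasingTuple k x => ∏ i, r i ^ (f.1 i - 1))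
      ((∏ i, r i) ^ x * ∏ i, ((∏ j ≤ i, r j) - 1)⁻¹) := by
  induction k generalizing x with
  | zero => simp
  | succ k ih =>
    have hsummable : Summable (fun f : IncreasingTuple (k + 1) x => ∏ i, r i ^ (f.1 i - 1)) :=
      .of_norm <| by simpa [norm_prod] using (hasSum_prod_zpow_of_one_lt x (‖r ·‖) hr).summable
    refine (snocEquiv k x).symm.hasSum_iff.mp <|
      (hasSum_prod_zpow_last (one_lt_norm_prod hr) x).sigma_of_hasSum
        (fun m => hasSum_prod_zpow_snoc (fun y => ih y (init r) fun i => hr _) m.1)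
        ((snocEquiv k x).symm.summable_iff.mpr hsummable)

end IncreasingTuple

theorem geometric_series_symmetrized_general (k : ℕ) (x : ℤ)
    (ξ : Fin k → ℂ) (hξ : ∀ i, 1 < ‖ξ i‖) :
    Summable (fun f : {f : Fin k → ℤ // StrictMono f ∧ ∀ i, f i ≤ x} =>
        ‖∏ i, ξ i ^ (f.1 i - 1)‖)
    ∧ ∑' f : {f : Fin k → ℤ // StrictMono f ∧ ∀ i, f i ≤ x},
          ∏ i, ξ i ^ (f.1 i - 1)
        = (∏ i, ξ i) ^ x *
            ∏ i : Fin k,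
              ((∏ j ∈ Finset.univ.filter (fun j : Fin k => j ≤ i), ξ j) - 1)⁻¹ := by
  simp only [filter_ge_eq_Iic]
  refine ⟨?_, (IncreasingTuple.hasSum_prod_zpow x ξ hξ).tsum_eq⟩
  simpa [norm_prod] using (IncreasingTuple.hasSum_prod_zpow_of_one_lt x (‖ξ ·‖) hξ).summable

/-- For k ≥ 1, x ∈ ℤ, and ξ_1,…,ξ_k ∈ ℂ with |ξ_i| > 1:
∑_{x_1 < ⋯ < x_k ≤ x} ∏_i ξ_i^{x_i − 1} = (ξ_1⋯ξ_k)^x ∏_i 1/(ξ_1⋯ξ_i − 1),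
where the series (over strictly increasing integer tuples bounded above by x)
converges absolutely. -/
theorem geometric_series_symmetrized (k : ℕ) (hk : 1 ≤ k) (x : ℤ)
    (ξ : Fin k → ℂ) (hξ : ∀ i, 1 < ‖ξ i‖) :
    Summable (fun f : {f : Fin k → ℤ // StrictMono f ∧ ∀ i, f i ≤ x} =>
        ‖∏ i, ξ i ^ (f.1 i - 1)‖)
    ∧ ∑' f : {f : Fin k → ℤ // StrictMono f ∧ ∀ i, f i ≤ x},
          ∏ i, ξ i ^ (f.1 i - 1)
        = (∏ i, ξ i) ^ x *
            ∏ i : Fin k,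
              ((∏ j ∈ Finset.univ.filter (fun j : Fin k => j ≤ i), ξ j) - 1)⁻¹ :=
  geometric_series_symmetrized_general k x ξ hξ
end

section
/- Fix 0 < q < 1. For f ∈ ℓ^1(ℤ_{≥0}), define its e_q-Laplace-type transform f̂(ζ) = ∑_{n ≥ 0} f(n)/(ζ q^n; q)_∞ for ζ ∈ ℂ \ {q^{−k}}_{k≥0}. Then for every m ≥ 0, f(m) = −q^m · (1/(2πi)) ∮_{C_m} (q^{m+1} ζ; q)_∞ f̂(ζ) dζ, where C_m is any positively oriented closed contour encircling exactly the points ζ = q^{−M} for 0 ≤ M ≤ m. -/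
/-!
On the circle `‖ζ‖ = R` the two infinite products telescope: `(q^{m+1}ζ; q)_∞ / (ζ q^n; q)_∞` is
`1 / ∏_{n ≤ i ≤ m} (1 - ζ q^i)` for `n ≤ m` and the polynomial `∏_{m < i < n} (1 - ζ q^i)` for
`n > m`. Polynomials integrate to zero; for `n < m` the rational function has all its poles
`q^{-i}` inside the circle and decays like `‖ζ‖⁻²`, so its integral vanishes as well. Only `n = m`
contributes, the residue of `1 / (1 - ζ q^m)` at `q^{-m}`. These quotients are bounded on the
circle uniformly in `n`, so the series may be integrated termwise.
-/

open Complex Finset Metric Filter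

section QPochhammer

variable {q : ℂ}

theorem summable_norm_mul_pow (hq : ‖q‖ < 1) (a : ℂ) : Summable fun j : ℕ ↦ ‖a * q ^ j‖ := by
  simpa [norm_mul, norm_pow] using (summable_geometric_of_lt_one (norm_nonneg q) hq).mul_left ‖a‖

theorem multipliable_one_sub_mul_pow (hq : ‖q‖ < 1) (a : ℂ) :
    Multipliable fun j : ℕ ↦ 1 - a * q ^ j := by
  simpa only [sub_eq_add_neg] using
    multipliable_one_add_of_summable (f := fun j : ℕ ↦ -(a * q ^ j))
    (by simpa using summable_norm_mul_pow hq a)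

theorem tprod_one_sub_mul_pow_ne_zero {a : ℂ} (hq : ‖q‖ < 1) (ha : ∀ j : ℕ, a * q ^ j ≠ 1) :
    ∏' j : ℕ, (1 - a * q ^ j) ≠ 0 := by
  simpa only [sub_eq_add_neg] using
    tprod_one_add_ne_zero_of_summable (f := fun j : ℕ ↦ -(a * q ^ j))
    (fun j ↦ by rw [← sub_eq_add_neg, sub_ne_zero]; exact (ha j).symm)
    (by simpa using summable_norm_mul_pow hq a)

theorem prod_Ico_mul_tprod_one_sub_mul_pow {a : ℂ} (hq : ‖q‖ < 1) {k l : ℕ} (hkl : k ≤ l) :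
    (∏ i ∈ Ico k l, (1 - a * q ^ i)) * ∏' j : ℕ, (1 - a * q ^ l * q ^ j) =
      ∏' j : ℕ, (1 - a * q ^ k * q ^ j) := by
  have hshift :
      (fun j : ℕ ↦ 1 - a * q ^ k * q ^ (j + (l - k))) = fun j ↦ 1 - a * q ^ l * q ^ j := by
    ext j
    rw [mul_assoc, mul_assoc, ← pow_add, ← pow_add]
    congr 3
    omega
  have h := Multipliable.prod_mul_tprod_nat_mul' (f := fun j : ℕ ↦ 1 - a * q ^ k * q ^ j)
    (k := l - k) (hshift ▸ multipliable_one_sub_mul_pow hq (a * q ^ l))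
  rw [← h, hshift, prod_Ico_eq_prod_range]
  simp_rw [mul_assoc, ← pow_add]

end QPochhammer

section CircleIntegral

variable {E : Type*} [NormedAddCommGroup E] [NormedSpace ℂ E]

theorem hasSum_circleIntegral_of_norm_le [CompleteSpace E] {ι : Type*} [Countable ι]
    {F : ι → ℂ → E} {c : ℂ} {R : ℝ} (hR : 0 ≤ R) {u : ι → ℝ} (hu : Summable u)
    (hF : ∀ i, ContinuousOn (F i) (sphere c R))
    (hFu : ∀ i, ∀ z ∈ sphere c R, ‖F i z‖ ≤ u i) :
    HasSum (fun i ↦ ∮ z in C(c, R), F i z) (∮ z in C(c, R), ∑' i, F i z) := by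
  have hsum : ∀ s : Finset ι,
      ∑ i ∈ s, (∮ z in C(c, R), F i z) = ∮ z in C(c, R), ∑ i ∈ s, F i z :=
    fun s ↦ (circleIntegral.integral_fun_sum fun i _ ↦ (hF i).circleIntegrable hR).symm
  simp only [HasSum, SummationFilter.unconditional_filter, hsum]
  exact (tendstoUniformlyOn_tsum hu hFu).tendsto_circleIntegral_of_continuousOn hR
    (Eventually.of_forall fun s ↦ continuousOn_finsetSum s fun i _ ↦ hF i)

/-- Cauchy's theorem moves the circle out to any radius `r ≥ R`, where the integral is
`O(1 / r)`. -/
theorem circleIntegral_eq_zero_of_differentiable_of_norm_le_div_sq {R r₀ C : ℝ} (hR : 0 < R)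
    {G : ℂ → E} (hG : ∀ z, R ≤ ‖z‖ → DifferentiableAt ℂ G z)
    (hGC : ∀ z, r₀ ≤ ‖z‖ → ‖G z‖ ≤ C / ‖z‖ ^ 2) : ∮ z in C(0, R), G z = 0 := by
  have hbound : ∀ r ≥ max R r₀, ‖∮ z in C(0, R), G z‖ ≤ 2 * Real.pi * C / r := by
    intro r hr
    have hRr : R ≤ r := le_of_max_le_left hr
    have hr0 : 0 < r := hR.trans_le hRr
    rw [← circleIntegral_eq_of_differentiable_on_annulus_off_countable hR hRr
      Set.countable_empty (fun z hz ↦ ?_) (fun z hz ↦ ?_)]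
    · calc ‖∮ z in C(0, r), G z‖ ≤ 2 * Real.pi * r * (C / r ^ 2) :=
            circleIntegral.norm_integral_le_of_norm_le_const hr0.le fun z hz ↦ by
              rw [mem_sphere_zero_iff_norm] at hz
              simpa [hz] using hGC z (hz ▸ le_of_max_le_right hr)
        _ = 2 * Real.pi * C / r := by field_simp
    · simp only [Set.mem_sdiff, mem_closedBall_zero_iff, mem_ball_zero_iff, not_lt] at hz
      exact (hG z hz.2).continuousAt.continuousWithinAt
    · simp only [Set.mem_sdiff, mem_closedBall_zero_iff, mem_ball_zero_iff, not_le,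
        Set.mem_empty_iff_false, not_false_eq_true, and_true] at hz
      exact hG z hz.2.le
  exact norm_le_zero_iff.mp <| ge_of_tendsto (tendsto_const_nhds.div_atTop tendsto_id)
    ((eventually_ge_atTop (max R r₀)).mono hbound)

end CircleIntegral

section RationalIntegrals

variable {ι : Type*} {R : ℝ}

theorem circleIntegral_prod_one_sub_mul (hR : 0 ≤ R) (s : Finset ι) (a : ι → ℂ) :
    ∮ z in C(0, R), ∏ i ∈ s, (1 - z * a i) = 0 :=
  circleIntegral_eq_zero_of_differentiable_on_off_countable hR Set.countable_empty
    (by fun_prop) fun _ _ ↦ by fun_prop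

theorem circleIntegral_inv_one_sub_mul {a : ℂ} (ha : 1 < R * ‖a‖) :
    ∮ z in C(0, R), (1 - z * a)⁻¹ = -a⁻¹ * (2 * Real.pi * I) := by
  have ha0 : a ≠ 0 := by rintro rfl; simp at ha; linarith
  have hfun : (fun z : ℂ ↦ (1 - z * a)⁻¹) = fun z ↦ -a⁻¹ * (z - a⁻¹)⁻¹ := by
    ext z
    rw [← inv_neg, ← mul_inv, neg_mul, mul_sub, mul_inv_cancel₀ ha0, mul_comm, neg_sub]
  rw [hfun, circleIntegral.integral_const_mul, circleIntegral.integral_sub_inv_of_mem_ball]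
  rwa [mem_ball_zero_iff, norm_inv, inv_lt_iff_one_lt_mul₀ (norm_pos_iff.mpr ha0)]

theorem circleIntegral_inv_prod_one_sub_mul {s : Finset ι} (hs : 2 ≤ #s) {a : ι → ℂ}
    (ha : ∀ i ∈ s, 1 < R * ‖a i‖) : ∮ z in C(0, R), (∏ i ∈ s, (1 - z * a i))⁻¹ = 0 := by
  obtain ⟨i₀, hi₀⟩ : s.Nonempty := card_pos.mp (by omega)
  have hR : 0 < R := pos_of_mul_pos_left (one_pos.trans (ha i₀ hi₀)) (norm_nonneg _)
  have hε : ∀ i ∈ s, 0 < ‖a i‖ - R⁻¹ := fun i hi ↦ by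
    rw [sub_pos, inv_lt_iff_one_lt_mul₀ hR, mul_comm]
    exact ha i hi
  have hprod : ∀ z : ℂ, R ≤ ‖z‖ →
      ‖z‖ ^ #s * ∏ i ∈ s, (‖a i‖ - R⁻¹) ≤ ‖∏ i ∈ s, (1 - z * a i)‖ := by
    intro z hz
    rw [norm_prod, ← prod_const, ← prod_mul_distrib]
    refine prod_le_prod (fun i hi ↦ mul_nonneg (norm_nonneg z) (hε i hi).le) fun i hi ↦ ?_
    have : 1 ≤ ‖z‖ / R := (one_le_div hR).mpr hz
    calc ‖z‖ * (‖a i‖ - R⁻¹) = ‖z * a i‖ - ‖z‖ / R := by rw [norm_mul]; ring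
      _ ≤ ‖z * a i‖ - ‖(1 : ℂ)‖ := by rw [norm_one]; linarith
      _ ≤ ‖1 - z * a i‖ := by rw [norm_sub_rev]; exact norm_sub_norm_le _ _
  have hpos : ∀ z : ℂ, R ≤ ‖z‖ → 0 < ‖∏ i ∈ s, (1 - z * a i)‖ := fun z hz ↦
    (mul_pos (pow_pos (hR.trans_le hz) _) (prod_pos hε)).trans_le (hprod z hz)
  refine circleIntegral_eq_zero_of_differentiable_of_norm_le_div_sq hR (r₀ := max R 1)
    (C := (∏ i ∈ s, (‖a i‖ - R⁻¹))⁻¹) (fun z hz ↦ ?_) fun z hz ↦ ?_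
  · exact (DifferentiableAt.fun_finsetProd fun i _ ↦ by fun_prop).inv
      (norm_pos_iff.mp (hpos z hz))
  · have hzR : R ≤ ‖z‖ := le_of_max_le_left hz
    have hz1 : 1 ≤ ‖z‖ := le_of_max_le_right hz
    have hc := prod_pos hε
    calc ‖(∏ i ∈ s, (1 - z * a i))⁻¹‖ ≤ (‖z‖ ^ 2 * ∏ i ∈ s, (‖a i‖ - R⁻¹))⁻¹ := by
          rw [norm_inv]
          refine inv_anti₀ (by positivity) ((mul_le_mul_of_nonneg_right
            (pow_le_pow_right₀ hz1 hs) hc.le).trans (hprod z hzR))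
      _ = (∏ i ∈ s, (‖a i‖ - R⁻¹))⁻¹ / ‖z‖ ^ 2 := by rw [mul_inv, div_eq_mul_inv, mul_comm]

end RationalIntegrals

section QPochhammerRatio

variable {q ζ : ℂ} {R : ℝ} {m : ℕ}

/-- The quotient `(ζ q^{m+1}; q)_∞ / (ζ q^n; q)_∞` with the common factors cancelled. -/
noncomputable def qPochhammerRatio (q : ℂ) (m n : ℕ) (ζ : ℂ) : ℂ :=
  if n ≤ m then (∏ i ∈ Ico n (m + 1), (1 - ζ * q ^ i))⁻¹
  else ∏ i ∈ Ico (m + 1) n, (1 - ζ * q ^ i)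

theorem le_norm_one_sub_mul_pow (hq : ‖q‖ ≤ 1) {i : ℕ} (hi : i ≤ m) :
    ‖ζ‖ * ‖q‖ ^ m - 1 ≤ ‖1 - ζ * q ^ i‖ := by
  calc ‖ζ‖ * ‖q‖ ^ m - 1 ≤ ‖ζ * q ^ i‖ - ‖(1 : ℂ)‖ := by
        rw [norm_mul, norm_pow, norm_one]
        gcongr ‖ζ‖ * ?_ - 1
        exact pow_le_pow_of_le_one (norm_nonneg q) hq hi
    _ ≤ ‖1 - ζ * q ^ i‖ := by rw [norm_sub_rev]; exact norm_sub_norm_le _ _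

theorem continuousOn_qPochhammerRatio (hq : ‖q‖ ≤ 1) (hR : 1 < R * ‖q‖ ^ m) (n : ℕ) :
    ContinuousOn (qPochhammerRatio q m n) (sphere 0 R) := by
  unfold qPochhammerRatio
  split_ifs with hn
  · refine ContinuousOn.inv₀ (by fun_prop) fun ζ hζ ↦ prod_ne_zero_iff.mpr fun i hi ↦ ?_
    rw [mem_sphere_zero_iff_norm] at hζ
    rw [← norm_pos_iff]
    have := le_norm_one_sub_mul_pow (ζ := ζ) hq (Nat.lt_succ_iff.mp (mem_Ico.mp hi).2)
    rw [hζ] at this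
    linarith
  · fun_prop

theorem exists_norm_qPochhammerRatio_le (hq : ‖q‖ < 1) (hR : 1 < R * ‖q‖ ^ m) :
    ∃ C, ∀ n, ∀ ζ ∈ sphere (0 : ℂ) R, ‖qPochhammerRatio q m n ζ‖ ≤ C := by
  set δ := R * ‖q‖ ^ m - 1
  have hδ : 0 < δ := by simp only [δ]; linarith
  refine ⟨max (max 1 δ⁻¹ ^ (m + 1)) (Real.exp (R * (1 - ‖q‖)⁻¹)), fun n ζ hζ ↦ ?_⟩
  rw [mem_sphere_zero_iff_norm] at hζ
  unfold qPochhammerRatio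
  split_ifs with hn
  · refine le_max_of_le_left ?_
    rw [norm_inv, norm_prod, ← prod_inv_distrib]
    calc ∏ i ∈ Ico n (m + 1), ‖1 - ζ * q ^ i‖⁻¹ ≤ ∏ _i ∈ Ico n (m + 1), max 1 δ⁻¹ := by
          refine prod_le_prod (fun _ _ ↦ by positivity) fun i hi ↦ le_max_of_le_right ?_
          have := le_norm_one_sub_mul_pow (ζ := ζ) hq.le (Nat.lt_succ_iff.mp (mem_Ico.mp hi).2)
          rw [hζ] at this
          exact inv_anti₀ hδ this
      _ ≤ max 1 δ⁻¹ ^ (m + 1) := by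
          rw [prod_const, Nat.card_Ico]
          exact pow_le_pow_right₀ (le_max_left _ _) (by omega)
  · refine le_max_of_le_right ?_
    rw [norm_prod]
    calc ∏ i ∈ Ico (m + 1) n, ‖1 - ζ * q ^ i‖
      _ ≤ ∏ i ∈ Ico (m + 1) n, Real.exp (R * ‖q‖ ^ i) := by
          refine prod_le_prod (fun _ _ ↦ norm_nonneg _) fun i _ ↦ ?_
          calc ‖1 - ζ * q ^ i‖ ≤ ‖(1 : ℂ)‖ + ‖ζ * q ^ i‖ := norm_sub_le _ _
            _ = R * ‖q‖ ^ i + 1 := by rw [norm_one, norm_mul, norm_pow, hζ, add_comm]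
            _ ≤ Real.exp (R * ‖q‖ ^ i) := Real.add_one_le_exp _
      _ = Real.exp (R * ∑ i ∈ Ico (m + 1) n, ‖q‖ ^ i) := by rw [← Real.exp_sum, mul_sum]
      _ ≤ Real.exp (R * (1 - ‖q‖)⁻¹) := by
          gcongr
          · exact hζ ▸ norm_nonneg ζ
          rw [← tsum_geometric_of_lt_one (norm_nonneg q) hq]
          exact Summable.sum_le_tsum _ (fun i _ ↦ by positivity)
            (summable_geometric_of_lt_one (norm_nonneg q) hq)

theorem tprod_div_tprod_eq_qPochhammerRatio (hq : ‖q‖ < 1) (hζ : ∀ j : ℕ, ζ * q ^ j ≠ 1)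
    (n : ℕ) :
    (∏' j : ℕ, (1 - ζ * q ^ (m + 1) * q ^ j)) / ∏' j : ℕ, (1 - ζ * q ^ n * q ^ j) =
      qPochhammerRatio q m n ζ := by
  have hne : ∀ k : ℕ, ∏' j : ℕ, (1 - ζ * q ^ k * q ^ j) ≠ 0 := fun k ↦
    tprod_one_sub_mul_pow_ne_zero hq fun j ↦ by rw [mul_assoc, ← pow_add]; exact hζ (k + j)
  unfold qPochhammerRatio
  split_ifs with hn
  · rw [← prod_Ico_mul_tprod_one_sub_mul_pow hq (Nat.le_succ_of_le hn),
      div_mul_cancel_right₀ (hne _)]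
  · rw [← prod_Ico_mul_tprod_one_sub_mul_pow hq (not_le.mp hn),
      mul_div_cancel_right₀ _ (hne _)]

theorem circleIntegral_qPochhammerRatio (hq : ‖q‖ ≤ 1) (hR : 1 < R * ‖q‖ ^ m) (n : ℕ) :
    ∮ ζ in C(0, R), qPochhammerRatio q m n ζ =
      if n = m then -(q ^ m)⁻¹ * (2 * Real.pi * I) else 0 := by
  have hR0 : 0 < R := pos_of_mul_pos_left (one_pos.trans hR) (by positivity)
  unfold qPochhammerRatio
  rcases lt_trichotomy n m with hn | rfl | hn
  · simp only [hn.le, hn.ne, if_true, if_false]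
    refine circleIntegral_inv_prod_one_sub_mul (by simp; omega) fun i hi ↦ ?_
    rw [norm_pow]
    exact hR.trans_le <| mul_le_mul_of_nonneg_left
      (pow_le_pow_of_le_one (norm_nonneg q) hq (Nat.lt_succ_iff.mp (mem_Ico.mp hi).2)) hR0.le
  · simp only [le_refl, if_true, Nat.Ico_succ_singleton, prod_singleton]
    exact circleIntegral_inv_one_sub_mul (by rwa [norm_pow])
  · simp only [not_le.mpr hn, hn.ne', if_false]
    exact circleIntegral_prod_one_sub_mul hR0.le _ _

theorem mul_pow_ne_one_of_norm_eq (hq : ‖q‖ ≤ 1)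
    (hR₁ : 1 < R * ‖q‖ ^ m) (hR₂ : R * ‖q‖ ^ (m + 1) < 1) (hζ : ‖ζ‖ = R) (j : ℕ) :
    ζ * q ^ j ≠ 1 := by
  intro h
  have hR : 0 ≤ R := hζ ▸ norm_nonneg ζ
  have hnorm : R * ‖q‖ ^ j = 1 := by rw [← hζ, ← norm_pow, ← norm_mul, h, norm_one]
  rcases le_or_gt j m with hj | hj
  · have := mul_le_mul_of_nonneg_left (pow_le_pow_of_le_one (norm_nonneg q) hq hj) hR
    linarith
  · have := mul_le_mul_of_nonneg_left
      (pow_le_pow_of_le_one (norm_nonneg q) hq (show m + 1 ≤ j from hj)) hR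
    linarith

theorem eqOn_tprod_mul_tsum_div_tprod (hq : ‖q‖ < 1) (hR₁ : 1 < R * ‖q‖ ^ m)
    (hR₂ : R * ‖q‖ ^ (m + 1) < 1) (f : ℕ → ℂ) :
    Set.EqOn (fun ζ ↦ (∏' j : ℕ, (1 - q ^ (m + 1) * ζ * q ^ j)) *
        ∑' n : ℕ, f n / ∏' j : ℕ, (1 - ζ * q ^ n * q ^ j))
      (fun ζ ↦ ∑' n : ℕ, f n * qPochhammerRatio q m n ζ) (sphere 0 R) := by
  intro ζ hζ
  rw [mem_sphere_zero_iff_norm] at hζ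
  simp only [← tsum_mul_left,
    ← tprod_div_tprod_eq_qPochhammerRatio hq (mul_pow_ne_one_of_norm_eq hq.le hR₁ hR₂ hζ)]
  simp_rw [mul_comm (q ^ (m + 1)) ζ]
  exact tsum_congr fun n ↦ by ring

end QPochhammerRatio

/-- Inversion of the e_q-Laplace-type transform
f̂(ζ) = ∑_{n ≥ 0} f(n)/(ζ q^n; q)_∞ for f ∈ ℓ¹(ℤ_{≥0}):
f(m) = −q^m (1/(2πi)) ∮_{C_m} (q^{m+1} ζ; q)_∞ f̂(ζ) dζ,
where C_m is a positively oriented contour encircling exactly the points q^{−M},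
0 ≤ M ≤ m; here C_m is taken to be the circle of radius R around 0 with
q^{−m} < R < q^{−(m+1)} (which encircles exactly those points). -/
theorem eq_laplace_inversion (q : ℝ) (h0 : 0 < q) (h1 : q < 1) (f : ℕ → ℂ)
    (hf : Summable fun n => ‖f n‖) (m : ℕ) (R : ℝ)
    (hR1 : q ^ (-(m : ℤ)) < R) (hR2 : R < q ^ (-(m : ℤ) - 1)) :
    f m = -(q : ℂ) ^ m * (2 * (Real.pi : ℂ) * Complex.I)⁻¹ *
      ∮ ζ in C(0, R),
        (∏' j : ℕ, (1 - (q : ℂ) ^ (m + 1) * ζ * (q : ℂ) ^ j)) *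
          ∑' n : ℕ, f n / ∏' j : ℕ, (1 - ζ * (q : ℂ) ^ n * (q : ℂ) ^ j) := by
  have hQ : ‖(q : ℂ)‖ = q := by simp [abs_of_pos h0]
  have hq : ‖(q : ℂ)‖ < 1 := by rwa [hQ]
  have hRm : 1 < R * ‖(q : ℂ)‖ ^ m := by
    rwa [hQ, ← inv_lt_iff_one_lt_mul₀ (pow_pos h0 m), ← zpow_natCast, ← zpow_neg]
  have hRm₁ : R * ‖(q : ℂ)‖ ^ (m + 1) < 1 := by
    rwa [hQ, ← lt_inv_mul_iff₀' (pow_pos h0 (m + 1)), mul_one, ← zpow_natCast, ← zpow_neg,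
      Nat.cast_succ, neg_add']
  have hR : 0 < R := pos_of_mul_pos_left (one_pos.trans hRm) (by positivity)
  have hintegrand := eqOn_tprod_mul_tsum_div_tprod hq hRm hRm₁ f
  obtain ⟨C, hC⟩ := exists_norm_qPochhammerRatio_le hq hRm
  have hsum := hasSum_circleIntegral_of_norm_le hR.le (hf.mul_right C)
    (F := fun n ζ ↦ f n * qPochhammerRatio q m n ζ)
    (fun n ↦ continuousOn_const.mul (continuousOn_qPochhammerRatio hq.le hRm n))
    fun n ζ hζ ↦ by rw [norm_mul]; exact mul_le_mul_of_nonneg_left (hC n ζ hζ) (norm_nonneg _)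
  simp only [circleIntegral.integral_const_mul, circleIntegral_qPochhammerRatio hq.le hRm,
    mul_ite, mul_zero] at hsum
  rw [circleIntegral.integral_congr hR.le hintegrand, ← hsum.tsum_eq, tsum_ite_eq]
  have hq0 : (q : ℂ) ≠ 0 := by exact_mod_cast h0.ne'
  field_simp
end

section
/- Let q ∈ (0,1) and k ≥ 1. Let u(t; n⃗) be defined for n⃗ ∈ (ℤ_{≥0})^k by the nested contour integral u(t;n⃗) = ((−1)^k q^{k(k−1)/2}/(2πi)^k) ∮⋯∮ ∏_{A<B}(z_A − z_B)/(z_A − q z_B) ∏_{j=1}^{k} (1 − z_j)^{−n_j} e^{(q−1) t z_j} dz_j/z_j (with contours for z_A containing {q z_B}_{B>A} and 1 but not 0). Then u satisfies the two-body boundary condition: whenever n_i = n_{i+1} for some 1 ≤ i ≤ k−1, (∇_i − q ∇_{i+1}) u(t; n⃗) = 0, where ∇_i f(n⃗) = f(n⃗ with n_i replaced by n_i − 1) − f(n⃗). -/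
/-- Iterated (nested) circle contour integral: variable 0 is integrated over the
circle of center `c 0` and radius `R 0` (the outermost contour), and so on. -/
noncomputable def multiCircleIntegral : (n : ℕ) → ((Fin n → ℂ) → ℂ) → (Fin n → ℂ) → (Fin n → ℝ) → ℂ
  | 0, F, _, _ => F (fun i => i.elim0)
  | n + 1, F, c, R =>
      ∮ z in C(c 0, R 0),
        multiCircleIntegral n (fun w => F (Fin.cons z w)) (fun i => c i.succ) (fun i => R i.succ)

/-- The nested contour integral
u(t;n⃗) = ((−1)^k q^{k(k−1)/2}/(2πi)^k) ∮⋯∮ ∏_{A<B}(z_A − z_B)/(z_A − q z_B)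
          ∏_j (1 − z_j)^{−n_j} e^{(q−1) t z_j} dz_j/z_j,
with the contour for z_A the circle centered at 1 of radius 1 − δ q^{2(k−1−A)};
these nested circles contain 1 and {q z_B}_{B>A} but not 0 (for 0 < δ < 1, 0 < q < 1). -/
noncomputable def uNested (q t δ : ℝ) (k : ℕ) (m : Fin k → ℤ) : ℂ :=
  (-1 : ℂ) ^ k * (q : ℂ) ^ (k * (k - 1) / 2) / (2 * (Real.pi : ℂ) * Complex.I) ^ k *
    multiCircleIntegral k
      (fun z =>
        (∏ p ∈ Finset.univ.filter (fun p : Fin k × Fin k => p.1 < p.2),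
            (z p.1 - z p.2) / (z p.1 - (q : ℂ) * z p.2)) *
          ∏ j : Fin k,
            ((1 - z j) ^ (-(m j)) * Complex.exp ((((q - 1) * t : ℝ) : ℂ) * z j) / z j))
      (fun _ => 1) (fun j => 1 - δ * q ^ (2 * (k - 1 - j.val)))

/-! Lowering `m i` multiplies the integrand by `1 - z i`, so `∇_i - q ∇_{i+1}` multiplies it by
`q z_{i+1} - z_i`, which cancels the denominator of the pair factor of `(z_i, z_{i+1})`. What is
left is `(z_{i+1} - z_i)` times a function `K` of `(z_i, z_{i+1})` that is symmetric, because
`m i = m (i+1)` and swapping two adjacent variables only permutes the other pair factors. `K` is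
holomorphic in `z_{i+1}` on the annulus between the two contours, so the inner contour can be
moved onto the outer one, and the double integral of the antisymmetric `(b - a) K a b` over one
circle squared vanishes by Fubini. The remaining variables are handled by writing the nested
integral as a torus integral and applying Fubini to bring the two variables innermost. -/

open Complex Metric Function MeasureTheory Finset

section Torus

variable {n : ℕ}

def torus (c : Fin n → ℂ) (R : Fin n → ℝ) : Set (Fin n → ℂ) :=
  Set.univ.pi fun j => sphere (c j) (R j)

lemma torusMap_mem_torus (c : Fin n → ℂ) {R : Fin n → ℝ} (hR : 0 ≤ R) (θ : Fin n → ℝ) :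
    torusMap c R θ ∈ torus c R := by
  intro j _
  simp [torusMap, norm_exp_ofReal_mul_I, abs_of_nonneg (hR j)]

lemma torusIntegrable_of_continuousOn {f : (Fin n → ℂ) → ℂ} {c : Fin n → ℂ} {R : Fin n → ℝ}
    (hR : 0 ≤ R) (hf : ContinuousOn f (torus c R)) : TorusIntegrable f c R :=
  (hf.comp_continuous (by unfold torusMap; fun_prop) (torusMap_mem_torus c hR)).integrableOn_Icc

lemma insertNth_mem_torus {c : Fin (n + 1) → ℂ} {R : Fin (n + 1) → ℝ} {p : Fin (n + 1)} {x : ℂ}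
    (hx : x ∈ sphere (c p) (R p)) {y : Fin n → ℂ}
    (hy : y ∈ torus (c ∘ p.succAbove) (R ∘ p.succAbove)) :
    p.insertNth x y ∈ torus c R := by
  simp only [torus, Set.mem_univ_pi, comp_apply] at hy ⊢
  exact p.forall_iff_succAbove.2 ⟨by simpa using hx, fun j => by simpa using hy j⟩

lemma continuousOn_comp_insertNth {f : (Fin (n + 1) → ℂ) → ℂ} {c : Fin (n + 1) → ℂ}
    {R : Fin (n + 1) → ℝ} (hf : ContinuousOn f (torus c R)) {p : Fin (n + 1)} {x : ℂ}
    (hx : x ∈ sphere (c p) (R p)) :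
    ContinuousOn (fun y => f (p.insertNth x y)) (torus (c ∘ p.succAbove) (R ∘ p.succAbove)) :=
  hf.comp (continuous_const.finInsertNth (A := fun _ => ℂ) p continuous_id).continuousOn
    fun _ hy => insertNth_mem_torus hx hy

theorem multiCircleIntegral_eq_torusIntegral {f : (Fin n → ℂ) → ℂ} {c : Fin n → ℂ}
    {R : Fin n → ℝ} (hR : 0 ≤ R) (hf : ContinuousOn f (torus c R)) :
    multiCircleIntegral n f c R = ∯ z in T(c, R), f z := by
  induction n with
  | zero =>
    rw [multiCircleIntegral, torusIntegral_dim0]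
    exact congrArg f (Subsingleton.elim _ _)
  | succ n ih =>
    rw [multiCircleIntegral, torusIntegral_succ (torusIntegrable_of_continuousOn hR hf)]
    refine circleIntegral.integral_congr (hR 0) fun x hx => ?_
    have := ih (fun j => hR j.succ) (continuousOn_comp_insertNth (p := 0) hf hx)
    simp only [Fin.insertNth_zero'] at this
    exact this

lemma torusIntegral_eq_zero_of_slices {f : (Fin (n + 1) → ℂ) → ℂ} {c : Fin (n + 1) → ℂ}
    {R : Fin (n + 1) → ℝ} (hR : 0 ≤ R) (hf : ContinuousOn f (torus c R)) (p : Fin (n + 1))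
    (h : ∀ x ∈ sphere (c p) (R p),
      (∯ y in T(c ∘ p.succAbove, R ∘ p.succAbove), f (p.insertNth x y)) = 0) :
    (∯ z in T(c, R), f z) = 0 := by
  rw [torusIntegral_succAbove (torusIntegrable_of_continuousOn hR hf) p,
    circleIntegral.integral_congr (hR p) h]
  simp [circleIntegral]

lemma Fin.exists_succAbove_eq_of_adjacent {i j : Fin (n + 3)} (hij : j.val = i.val + 1) :
    ∃ p : Fin (n + 3), ∃ i' j' : Fin (n + 2),
      p.succAbove i' = i ∧ p.succAbove j' = j ∧ j'.val = i'.val + 1 := by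
  by_cases hi : i.val = 0
  · refine ⟨Fin.last _, 0, 1, ?_, ?_, rfl⟩ <;> ext <;> simp [Fin.succAbove_last] <;> omega
  · refine ⟨0, ⟨i.val - 1, by omega⟩, ⟨j.val - 1, by omega⟩, ?_, ?_, by simp; omega⟩ <;>
      ext <;> simp <;> omega

theorem torusIntegral_eq_zero_of_adjacent {f : (Fin n → ℂ) → ℂ} {c : Fin n → ℂ}
    {R : Fin n → ℝ} (hR : 0 ≤ R) (hf : ContinuousOn f (torus c R)) {i j : Fin n}
    (hij : j.val = i.val + 1)
    (h : ∀ z ∈ torus c R,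
      (∮ a in C(c i, R i), ∮ b in C(c j, R j), f (update (update z i a) j b)) = 0) :
    (∯ z in T(c, R), f z) = 0 := by
  induction n with
  | zero => exact i.elim0
  | succ n ih =>
    rcases n with _ | _ | n
    · omega
    · have := j.isLt
      obtain rfl : i = 0 := by ext; simp; omega
      obtain rfl : j = 1 := by ext; simp; omega
      set z : Fin 2 → ℂ := fun l => c l + R l
      have hz : z ∈ torus c R := fun l _ => by simp [z, abs_of_nonneg (hR l)]
      rw [torusIntegral_succ (torusIntegrable_of_continuousOn hR hf)]
      convert h z hz using 3 with a
      rw [torusIntegral_dim1]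
      congr 1 with b
      congr 1 with l
      fin_cases l <;> rfl
    · obtain ⟨p, i', j', rfl, rfl, hij'⟩ := Fin.exists_succAbove_eq_of_adjacent hij
      refine torusIntegral_eq_zero_of_slices hR hf p fun x hx =>
        ih (fun l => hR _) (continuousOn_comp_insertNth hf hx) hij' fun y hy => ?_
      simpa only [comp_apply, Fin.insertNth_update] using h _ (insertNth_mem_torus hx hy)

end Torus

theorem circleIntegral_comm {g : ℂ → ℂ → ℂ} {c c' : ℂ} {r r' : ℝ} (hr : 0 ≤ r) (hr' : 0 ≤ r')
    (hg : ContinuousOn (uncurry g) (sphere c r ×ˢ sphere c' r')) :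
    (∮ a in C(c, r), ∮ b in C(c', r'), g a b) = ∮ b in C(c', r'), ∮ a in C(c, r), g a b := by
  have hR : 0 ≤ ![r, r'] := fun l => by fin_cases l <;> simpa
  have hf : ContinuousOn (fun z : Fin 2 → ℂ => g (z 0) (z 1)) (torus ![c, c'] ![r, r']) :=
    hg.comp (f := fun z : Fin 2 → ℂ => (z 0, z 1)) (by fun_prop)
      fun z hz => ⟨hz 0 trivial, hz 1 trivial⟩
  have hI := torusIntegrable_of_continuousOn hR hf
  have h₁ := torusIntegral_succ hI
  have h₂ := torusIntegral_succAbove hI (Fin.last 1)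
  simp only [torusIntegral_dim1, Fin.insertNth_last'] at h₁ h₂
  simpa [Fin.snoc] using h₁.symm.trans h₂

theorem circleIntegral_circleIntegral_sub_mul_eq_zero {c : ℂ} {r₁ r₂ : ℝ} (h₂ : 0 < r₂)
    (h₁₂ : r₂ ≤ r₁) {K : ℂ → ℂ → ℂ} (hK : ∀ a b, K a b = K b a)
    (hd : ∀ a ∈ sphere c r₁, ∀ b ∈ closedBall c r₁ \ ball c r₂,
      DifferentiableAt ℂ (uncurry K) (a, b)) :
    (∮ a in C(c, r₁), ∮ b in C(c, r₂), (b - a) * K a b) = 0 := by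
  have hr₁ : 0 ≤ r₁ := h₂.le.trans h₁₂
  have hsphere : sphere c r₁ ⊆ closedBall c r₁ \ ball c r₂ := fun x hx =>
    ⟨sphere_subset_closedBall hx, by simp only [mem_ball, mem_sphere.1 hx]; linarith⟩
  have hslice : ∀ a ∈ sphere c r₁, ∀ b ∈ closedBall c r₁ \ ball c r₂,
      DifferentiableAt ℂ (fun b => (b - a) * K a b) b := fun a ha b hb =>
    (differentiableAt_id.sub_const a).mul
      ((hd a ha b hb).comp b (differentiableAt_const a |>.prodMk differentiableAt_id))
  -- the inner contour can be moved out to the outer circle, where `(a, b) ↦ (b - a) K a b`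
  -- is antisymmetric
  have hdeform : ∀ a ∈ sphere c r₁,
      (∮ b in C(c, r₂), (b - a) * K a b) = ∮ b in C(c, r₁), (b - a) * K a b := fun a ha =>
    (circleIntegral_eq_of_differentiable_on_annulus_off_countable h₂ h₁₂ Set.countable_empty
      (fun b hb => (hslice a ha b hb).continuousAt.continuousWithinAt)
      fun b hb => hslice a ha b ⟨ball_subset_closedBall hb.1.1,
        fun h => hb.1.2 (ball_subset_closedBall h)⟩).symm
  rw [circleIntegral.integral_congr hr₁ hdeform]
  have hcont : ContinuousOn (uncurry fun a b => (b - a) * K a b) (sphere c r₁ ×ˢ sphere c r₁) :=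
    fun p hp => ((continuous_snd.sub continuous_fst).continuousAt.mul
      (hd p.1 hp.1 p.2 (hsphere hp.2)).continuousAt).continuousWithinAt
  have hneg : (∮ b in C(c, r₁), ∮ a in C(c, r₁), (b - a) * K a b) =
      -∮ a in C(c, r₁), ∮ b in C(c, r₁), (b - a) * K a b := by
    have : (fun b => ∮ a in C(c, r₁), (b - a) * K a b) =
        fun b => -1 * ∮ a in C(c, r₁), (a - b) * K b a := by
      ext b
      rw [← circleIntegral.integral_const_mul]
      congr 1 with a
      rw [hK]
      ring
    rw [this, circleIntegral.integral_const_mul]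
    ring
  linear_combination (circleIntegral_comm hr₁ hr₁ hcont).trans hneg / 2

noncomputable section Integrand

variable {k : ℕ} (q t : ℝ)

def pairFactor (x y : ℂ) : ℂ := (x - y) / (x - q * y)

def siteFactor (n : ℤ) (x : ℂ) : ℂ := (1 - x) ^ (-n) * exp (((q - 1) * t : ℝ) * x) / x

def orderedPairs (k : ℕ) : Finset (Fin k × Fin k) := univ.filter fun p => p.1 < p.2

def integrand (S : Finset (Fin k × Fin k)) (m : Fin k → ℤ) (z : Fin k → ℂ) : ℂ :=
  (∏ p ∈ S, pairFactor q (z p.1) (z p.2)) * ∏ l, siteFactor q t (m l) (z l)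

def nabla {α : Type*} [Sub α] (i : Fin k) (f : (Fin k → ℤ) → α) (m : Fin k → ℤ) : α :=
  f (update m i (m i - 1)) - f m

variable {q t}

lemma siteFactor_sub_one (n : ℤ) {x : ℂ} (hx : 1 - x ≠ 0) :
    siteFactor q t (n - 1) x = (1 - x) * siteFactor q t n x := by
  rw [siteFactor, siteFactor, neg_sub', sub_neg_eq_add, zpow_add_one₀ hx]
  ring

lemma integrand_update_sub_one (S : Finset (Fin k × Fin k)) (m : Fin k → ℤ) (i : Fin k)
    {z : Fin k → ℂ} (hz : 1 - z i ≠ 0) :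
    integrand q t S (update m i (m i - 1)) z = (1 - z i) * integrand q t S m z := by
  have hsite : (fun l => siteFactor q t (update m i (m i - 1) l) (z l)) =
      update (fun l => siteFactor q t (m l) (z l)) i ((1 - z i) * siteFactor q t (m i) (z i)) := by
    ext l
    rcases eq_or_ne l i with rfl | hl
    · simp [siteFactor_sub_one _ hz]
    · simp [hl]
  rw [integrand, integrand, hsite, prod_update_of_mem (mem_univ i),
    prod_eq_mul_prod_sdiff_singleton_of_mem (mem_univ i)]
  ring

lemma nabla_sub_nabla_integrand (m : Fin k → ℤ) {i j : Fin k} (hij : i < j) {z : Fin k → ℂ}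
    (hi : 1 - z i ≠ 0) (hj : 1 - z j ≠ 0) (hq : z i - q * z j ≠ 0) :
    nabla i (fun μ => integrand q t (orderedPairs k) μ z) m
        - q * nabla j (fun μ => integrand q t (orderedPairs k) μ z) m
      = (z j - z i) * integrand q t ((orderedPairs k).erase (i, j)) m z := by
  have hmem : (i, j) ∈ orderedPairs k := by simpa [orderedPairs] using hij
  simp only [nabla, integrand_update_sub_one _ _ _ hi, integrand_update_sub_one _ _ _ hj]
  have hcancel : (z i - z j) / (z i - q * z j) * (q * z j - z i) = z j - z i := by
    rw [div_mul_eq_mul_div, div_eq_iff hq]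
    ring
  rw [integrand, ← mul_prod_erase _ _ hmem, pairFactor, integrand]
  linear_combination (∏ p ∈ (orderedPairs k).erase (i, j), pairFactor q (z p.1) (z p.2)) *
    (∏ l, siteFactor q t (m l) (z l)) * hcancel

lemma swap_mem_erase_orderedPairs_iff {i j : Fin k} (hij : j.val = i.val + 1)
    (p : Fin k × Fin k) :
    (Equiv.swap i j p.1, Equiv.swap i j p.2) ∈ (orderedPairs k).erase (i, j) ↔
      p ∈ (orderedPairs k).erase (i, j) := by
  obtain ⟨a, b⟩ := p
  simp only [orderedPairs, mem_erase, mem_filter, mem_univ, true_and, ne_eq, Prod.ext_iff,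
    Equiv.swap_apply_def, Fin.lt_def, Fin.ext_iff]
  split_ifs <;> simp_all <;> omega

lemma integrand_erase_comp_swap {i j : Fin k} (hij : j.val = i.val + 1) {m : Fin k → ℤ}
    (hm : m i = m j) (z : Fin k → ℂ) :
    integrand q t ((orderedPairs k).erase (i, j)) m (z ∘ Equiv.swap i j) =
      integrand q t ((orderedPairs k).erase (i, j)) m z := by
  have hmσ : ∀ l, m (Equiv.swap i j l) = m l := fun l => by
    rcases eq_or_ne l i with rfl | hli
    · simp [hm]
    rcases eq_or_ne l j with rfl | hlj
    · simp [hm]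
    · rw [Equiv.swap_apply_of_ne_of_ne hli hlj]
  rw [integrand, integrand]
  congr 1
  · exact prod_equiv ((Equiv.swap i j).prodCongr (Equiv.swap i j))
      (fun p => (swap_mem_erase_orderedPairs_iff hij p).symm) fun _ _ => rfl
  · rw [← Equiv.prod_comp (Equiv.swap i j) fun l => siteFactor q t (m l) (z l)]
    simp only [comp_apply, hmσ]

lemma update_update_comp_swap {α : Type*} {i j : Fin k} (hij : i ≠ j) (z : Fin k → α) (a b : α) :
    update (update z i a) j b ∘ Equiv.swap i j = update (update z i b) j a := by
  ext l
  simp only [comp_apply, Equiv.swap_apply_def, update_apply]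
  split_ifs <;> simp_all

lemma differentiableAt_integrand (S : Finset (Fin k × Fin k))
    (m : Fin k → ℤ) {z : Fin k → ℂ} (hz : ∀ l, z l ≠ 0 ∧ 1 - z l ≠ 0)
    (hS : ∀ p ∈ S, z p.1 - q * z p.2 ≠ 0) :
    DifferentiableAt ℂ (integrand q t S m) z := by
  classical
  have hpair : ∀ p ∈ S, DifferentiableAt ℂ (fun z : Fin k → ℂ => pairFactor q (z p.1) (z p.2)) z :=
    fun p hp => by
      unfold pairFactor
      fun_prop (disch := exact hS p hp)
  have hsite : ∀ l ∈ univ, DifferentiableAt ℂ (fun z : Fin k → ℂ => siteFactor q t (m l) (z l)) z :=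
    fun l _ => by
      unfold siteFactor
      fun_prop (disch := first | exact (hz l).1 | exact Or.inl (hz l).2)
  exact (HasFDerivAt.finsetProd fun p hp => (hpair p hp).hasFDerivAt).differentiableAt.mul
    (HasFDerivAt.finsetProd fun l hl => (hsite l hl).hasFDerivAt).differentiableAt

lemma torusIntegral_nabla_sub_nabla {n : ℕ} {F : (Fin k → ℤ) → (Fin n → ℂ) → ℂ}
    {c : Fin n → ℂ} {R : Fin n → ℝ} (hF : ∀ μ, TorusIntegrable (F μ) c R) (m : Fin k → ℤ)
    (i j : Fin k) (a : ℂ) :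
    (∯ z in T(c, R), (nabla i (F · z) m - a * nabla j (F · z) m)) =
      nabla i (fun μ => ∯ z in T(c, R), F μ z) m - a * nabla j (fun μ => ∯ z in T(c, R), F μ z) m := by
  have hsub : ∀ μ ν, TorusIntegrable (fun z => F μ z - F ν z) c R := fun μ ν => (hF μ).sub (hF ν)
  have hmul : ∀ μ ν, TorusIntegrable (fun z => a * (F μ z - F ν z)) c R := fun μ ν =>
    (hsub μ ν).const_mul a
  simp only [nabla]
  rw [torusIntegral_sub (hsub _ _) (hmul _ _), torusIntegral_const_mul,
    torusIntegral_sub (hF _) (hF _), torusIntegral_sub (hF _) (hF _)]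

end Integrand

noncomputable section Contours

variable {q t δ : ℝ} {k : ℕ}

def radius (q δ : ℝ) (k : ℕ) (j : Fin k) : ℝ := 1 - δ * q ^ (2 * (k - 1 - j.val))

lemma radius_pos (hq0 : 0 ≤ q) (hq1 : q ≤ 1) (hδ1 : δ < 1) (j : Fin k) : 0 < radius q δ k j := by
  have := pow_le_one₀ hq0 hq1 (n := 2 * (k - 1 - j.val))
  have := pow_nonneg hq0 (2 * (k - 1 - j.val))
  rw [radius]
  rcases le_or_gt δ 0 with hδ | hδ <;> nlinarith

lemma radius_lt_one (hq : 0 < q) (hδ : 0 < δ) (j : Fin k) : radius q δ k j < 1 := by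
  rw [radius]
  have := pow_pos hq (2 * (k - 1 - j.val))
  nlinarith

lemma mul_radius_add_lt (hq0 : 0 < q) (hq1 : q < 1) (hδ : 0 < δ) {A B : Fin k} (hAB : A < B) :
    q * radius q δ k B + (1 - q) < radius q δ k A := by
  have hexp : 2 * (k - 1 - B.val) + 1 < 2 * (k - 1 - A.val) := by
    have := B.isLt
    rw [Fin.lt_def] at hAB
    omega
  have := mul_lt_mul_of_pos_left (pow_lt_pow_right_of_lt_one₀ hq0 hq1 hexp) hδ
  rw [pow_succ] at this
  rw [radius, radius]
  nlinarith

lemma radius_strictAnti (hq0 : 0 < q) (hq1 : q < 1) (hδ : 0 < δ) :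
    StrictAnti (radius q δ k) := fun A B hAB => by
  have := mul_radius_add_lt hq0 hq1 hδ hAB
  have := radius_lt_one hq0 hδ A
  nlinarith [radius_lt_one hq0 hδ B]

lemma sub_mul_ne_zero_of_radius (hq0 : 0 < q) (hq1 : q < 1) (hδ : 0 < δ) {A B : Fin k}
    (hAB : A < B) {x y : ℂ} (hx : radius q δ k A ≤ ‖x - 1‖) (hy : ‖y - 1‖ ≤ radius q δ k B) :
    x - q * y ≠ 0 := by
  have hqy : ‖q * y - 1‖ ≤ q * ‖y - 1‖ + (1 - q) := calc
    ‖q * y - 1‖ = ‖(q : ℂ) * (y - 1) + ((q - 1 : ℝ) : ℂ)‖ := by push_cast; ring_nf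
    _ ≤ q * ‖y - 1‖ + (1 - q) := by
      refine (norm_add_le _ _).trans_eq ?_
      rw [norm_mul, norm_real, norm_real, Real.norm_of_nonneg hq0.le,
        Real.norm_of_nonpos (by linarith)]
      ring
  have := mul_radius_add_lt hq0 hq1 hδ hAB
  rw [sub_ne_zero]
  rintro rfl
  nlinarith

lemma ne_zero_and_one_sub_ne_zero {x : ℂ} (h₀ : 0 < ‖x - 1‖) (h₁ : ‖x - 1‖ < 1) :
    x ≠ 0 ∧ 1 - x ≠ 0 := by
  refine ⟨?_, fun h => ?_⟩
  · rintro rfl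
    simp at h₁
  · rw [sub_eq_zero] at h
    simp [← h] at h₀

lemma differentiableAt_integrand_of_mem_torus (hq0 : 0 < q) (hq1 : q < 1) (hδ0 : 0 < δ)
    (hδ1 : δ < 1) (m : Fin k → ℤ) {w : Fin k → ℂ}
    (hw : w ∈ torus (fun _ => 1) (radius q δ k)) :
    DifferentiableAt ℂ (integrand q t (orderedPairs k) m) w := by
  have hnorm : ∀ l, ‖w l - 1‖ = radius q δ k l := fun l => mem_sphere_iff_norm.1 (hw l trivial)
  refine differentiableAt_integrand _ m (fun l => ne_zero_and_one_sub_ne_zero ?_ ?_) fun p hp => ?_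
  · exact (hnorm l).symm ▸ radius_pos hq0.le hq1.le hδ1 l
  · exact (hnorm l).symm ▸ radius_lt_one hq0 hδ0 l
  · exact sub_mul_ne_zero_of_radius hq0 hq1 hδ0 (by simpa [orderedPairs] using hp)
      (hnorm _).ge (hnorm _).le

lemma differentiableAt_integrand_erase (hq0 : 0 < q) (hq1 : q < 1) (hδ0 : 0 < δ)
    (hδ1 : δ < 1) (m : Fin k → ℤ) {i j : Fin k} (hij : j.val = i.val + 1) {w : Fin k → ℂ}
    (hw : ∀ l ≠ j, ‖w l - 1‖ = radius q δ k l) (hj₁ : radius q δ k j ≤ ‖w j - 1‖)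
    (hj₂ : ‖w j - 1‖ ≤ radius q δ k i) :
    DifferentiableAt ℂ (integrand q t ((orderedPairs k).erase (i, j)) m) w := by
  have hnorm : ∀ l, 0 < ‖w l - 1‖ ∧ ‖w l - 1‖ < 1 := fun l => by
    rcases eq_or_ne l j with rfl | hl
    · exact ⟨(radius_pos hq0.le hq1.le hδ1 l).trans_le hj₁, hj₂.trans_lt (radius_lt_one hq0 hδ0 i)⟩
    · rw [hw l hl]
      exact ⟨radius_pos hq0.le hq1.le hδ1 l, radius_lt_one hq0 hδ0 l⟩
  refine differentiableAt_integrand _ m (fun l => ne_zero_and_one_sub_ne_zero (hnorm l).1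
    (hnorm l).2) fun ⟨A, B⟩ hp => ?_
  simp only [orderedPairs, mem_erase, mem_filter, mem_univ, true_and, ne_eq, Prod.ext_iff] at hp
  obtain ⟨hne, hAB⟩ := hp
  rcases eq_or_ne B j with rfl | hBj
  · refine sub_mul_ne_zero_of_radius hq0 hq1 hδ0 (A := A) (B := i) ?_ (hw A hAB.ne).ge hj₂
    rw [Fin.lt_def] at hAB ⊢
    have : A.val ≠ i.val := fun h => hne ⟨Fin.ext h, rfl⟩
    omega
  rcases eq_or_ne A j with rfl | hAj
  · exact sub_mul_ne_zero_of_radius hq0 hq1 hδ0 hAB hj₁ (hw B hBj).le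
  · exact sub_mul_ne_zero_of_radius hq0 hq1 hδ0 hAB (hw A hAj).ge (hw B hBj).le

lemma circleIntegral_circleIntegral_nabla_integrand_eq_zero (hq0 : 0 < q) (hq1 : q < 1)
    (hδ0 : 0 < δ) (hδ1 : δ < 1) {m : Fin k → ℤ} {i j : Fin k} (hij : j.val = i.val + 1)
    (hm : m i = m j) {z : Fin k → ℂ} (hz : z ∈ torus (fun _ => 1) (radius q δ k)) :
    (∮ a in C(1, radius q δ k i), ∮ b in C(1, radius q δ k j),
      (nabla i (fun μ => integrand q t (orderedPairs k) μ (update (update z i a) j b)) m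
        - q * nabla j (fun μ => integrand q t (orderedPairs k) μ (update (update z i a) j b)) m))
      = 0 := by
  have hlt : i < j := by rw [Fin.lt_def]; omega
  have hR : ∀ l, 0 < radius q δ k l := radius_pos hq0.le hq1.le hδ1
  have hnorm : ∀ l, ‖z l - 1‖ = radius q δ k l := fun l => mem_sphere_iff_norm.1 (hz l trivial)
  set K : ℂ → ℂ → ℂ := fun a b =>
    integrand q t ((orderedPairs k).erase (i, j)) m (update (update z i a) j b)
  have hfactor : ∀ a ∈ sphere (1 : ℂ) (radius q δ k i), ∀ b ∈ sphere (1 : ℂ) (radius q δ k j),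
      nabla i (fun μ => integrand q t (orderedPairs k) μ (update (update z i a) j b)) m
        - q * nabla j (fun μ => integrand q t (orderedPairs k) μ (update (update z i a) j b)) m
        = (b - a) * K a b := fun a ha b hb => by
    rw [mem_sphere_iff_norm] at ha hb
    have ha₁ := (ne_zero_and_one_sub_ne_zero (ha ▸ hR i) (ha ▸ radius_lt_one hq0 hδ0 i)).2
    have hb₁ := (ne_zero_and_one_sub_ne_zero (hb ▸ hR j) (hb ▸ radius_lt_one hq0 hδ0 j)).2
    have hab := sub_mul_ne_zero_of_radius hq0 hq1 hδ0 hlt ha.ge hb.le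
    have hwi : update (update z i a) j b i = a := by simp [hlt.ne]
    have hwj : update (update z i a) j b j = b := by simp
    have := nabla_sub_nabla_integrand (t := t) (z := update (update z i a) j b) m hlt
      (by rwa [hwi]) (by rwa [hwj]) (by rwa [hwi, hwj])
    rwa [hwi, hwj] at this
  rw [circleIntegral.integral_congr (hR i).le fun a ha =>
    circleIntegral.integral_congr (hR j).le (hfactor a ha)]
  refine circleIntegral_circleIntegral_sub_mul_eq_zero (hR j)
    ((radius_strictAnti hq0 hq1 hδ0).antitone hlt.le) ?_ fun a ha b hb => ?_
  · intro a b
    simp only [K]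
    rw [← update_update_comp_swap hlt.ne z a b, integrand_erase_comp_swap hij hm]
  · have hupd : Differentiable ℂ fun p : ℂ × ℂ => update (update z i p.1) j p.2 :=
      differentiable_pi.2 fun l => by
        simp only [update_apply]
        split_ifs <;> fun_prop
    rw [mem_sphere_iff_norm] at ha
    simp only [Set.mem_sdiff, mem_closedBall_iff_norm, mem_ball_iff_norm, not_lt] at hb
    refine (differentiableAt_integrand_erase hq0 hq1 hδ0 hδ1 m hij (fun l hl => ?_)
      (by simpa using hb.2) (by simpa using hb.1)).comp (a, b) (hupd _)
    rcases eq_or_ne l i with rfl | hli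
    · simpa [hl] using ha
    · simpa [hl, hli] using hnorm l

end Contours

theorem uNested_boundary_condition_general (q t δ : ℝ) (h0 : 0 < q) (h1 : q < 1)
    (hδ0 : 0 < δ) (hδ1 : δ < 1) (k : ℕ) (m : Fin k → ℤ)
    (i : Fin k) (hi : i.val + 1 < k) (hadj : m i = m ⟨i.val + 1, hi⟩) :
    (uNested q t δ k (Function.update m i (m i - 1)) - uNested q t δ k m)
      - (q : ℂ) * (uNested q t δ k
            (Function.update m ⟨i.val + 1, hi⟩ (m ⟨i.val + 1, hi⟩ - 1))
          - uNested q t δ k m) = 0 := by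
  set R := radius q δ k
  have hR : 0 ≤ R := fun l => (radius_pos h0.le h1.le hδ1 l).le
  have hcont : ∀ μ, ContinuousOn (integrand q t (orderedPairs k) μ) (torus (fun _ => 1) R) :=
    fun μ w hw => (differentiableAt_integrand_of_mem_torus h0 h1 hδ0 hδ1 μ hw).continuousAt
      |>.continuousWithinAt
  obtain ⟨C, huNested⟩ : ∃ C : ℂ, ∀ μ, uNested q t δ k μ =
      C * ∯ z in T(fun _ => 1, R), integrand q t (orderedPairs k) μ z :=
    ⟨_, fun μ => congrArg (_ * ·) (multiCircleIntegral_eq_torusIntegral hR (hcont μ))⟩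
  have hvanish : (∯ z in T(fun _ => 1, R),
      (nabla i (integrand q t (orderedPairs k) · z) m
        - q * nabla ⟨i.val + 1, hi⟩ (integrand q t (orderedPairs k) · z) m)) = 0 :=
    torusIntegral_eq_zero_of_adjacent hR
      (((hcont _).sub (hcont _)).sub (continuousOn_const.mul ((hcont _).sub (hcont _)))) rfl
      fun z hz => circleIntegral_circleIntegral_nabla_integrand_eq_zero h0 h1 hδ0 hδ1 rfl hadj hz
  rw [torusIntegral_nabla_sub_nabla
    (fun μ => torusIntegrable_of_continuousOn hR (hcont μ))] at hvanish
  simp only [nabla] at hvanish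
  simp only [huNested]
  linear_combination C * hvanish

/-- The nested contour integral u(t;n⃗) satisfies the two-body boundary
condition: whenever n_i = n_{i+1}, (∇_i − q ∇_{i+1}) u(t;n⃗) = 0, where
∇_i f(n⃗) = f(n⃗ with n_i replaced by n_i − 1) − f(n⃗). -/
theorem uNested_boundary_condition (q t δ : ℝ) (h0 : 0 < q) (h1 : q < 1)
    (hδ0 : 0 < δ) (hδ1 : δ < 1) (k : ℕ) (m : Fin k → ℤ) (hm : ∀ j, 0 ≤ m j)
    (i : Fin k) (hi : i.val + 1 < k) (hadj : m i = m ⟨i.val + 1, hi⟩) :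
    (uNested q t δ k (Function.update m i (m i - 1)) - uNested q t δ k m)
      - (q : ℂ) * (uNested q t δ k
            (Function.update m ⟨i.val + 1, hi⟩ (m ⟨i.val + 1, hi⟩ - 1))
          - uNested q t δ k m) = 0 :=
  uNested_boundary_condition_general q t δ h0 h1 hδ0 hδ1 k m i hi hadj
end
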